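/- arXiv:1410.1301 — 3 statements merged into one kernel-verified Lean document; each statement's English description precedes it below -/
import Mathlib

section
/- Let X be a complex Banach space and let T be a bounded C₀-semigroup on X with generator A. Suppose ω : ℝ₊ → (0, ∞) is a dominating function for T (i.e. ω is decreasing and ‖T(t) A R(1, A)‖ ≤ ω(t) for all t ≥ 0) such that ω(t) → 0 as t → ∞, and define ω*(s) = min{t ≥ 0 : ω(t) ≤ s} for s > 0. Then iσ(A) ∩ ℝ ⊂ {0}, sup{‖R(is, A)‖ : |s| ≥ 1} < ∞, and for any c ∈ (0, 1), ‖R(is, A)‖ = O(1/|s| + ω*(c|s|)) as s → 0. -/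
open Filter Topology MeasureTheory Set

namespace KTpaper

variable {X : Type*} [NormedAddCommGroup X] [NormedSpace ℂ X] [CompleteSpace X]

/-- `T` is a strongly continuous one-parameter semigroup (C₀-semigroup) on `X`;
the values of `T` on `(-∞,0)` are irrelevant. -/
structure IsC0Semigroup (T : ℝ → X →L[ℂ] X) : Prop where
  map_zero : T 0 = 1
  map_add : ∀ s t : ℝ, 0 ≤ s → 0 ≤ t → T (s + t) = (T s).comp (T t)
  strongContinuity : ∀ x : X, ContinuousOn (fun t : ℝ => T t x) (Set.Ici (0 : ℝ))

/-- The semigroup `T` is bounded: `sup_{t ≥ 0} ‖T(t)‖ < ∞`. -/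
def IsBoundedSG (T : ℝ → X →L[ℂ] X) : Prop :=
  ∃ M : ℝ, ∀ t : ℝ, 0 ≤ t → ‖T t‖ ≤ M

/-- The (in general unbounded) partially defined linear operator `A` is the generator
of `T`:  `x ∈ D(A)` with `A x = y` if and only if `(T(t)x - x)/t → y` as `t → 0+`. -/
def IsGenerator (T : ℝ → X →L[ℂ] X) (A : X →ₗ.[ℂ] X) : Prop :=
  ∀ x y : X, (∃ hx : x ∈ A.domain, A ⟨x, hx⟩ = y) ↔
    Filter.Tendsto (fun t : ℝ => (t : ℂ)⁻¹ • (T t x - x))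
      (nhdsWithin 0 (Set.Ioi 0)) (nhds y)

/-- `R` is the resolvent operator `R(lam, A) = (lam - A)⁻¹` of `A` at `lam`. -/
def IsResolventAt (A : X →ₗ.[ℂ] X) (lam : ℂ) (R : X →L[ℂ] X) : Prop :=
  (∀ x : X, ∃ hx : R x ∈ A.domain, lam • R x - A ⟨R x, hx⟩ = x) ∧
  (∀ x : A.domain, R (lam • (x : X) - A x) = x)

/-- The resolvent set `ρ(A)`. -/
def resolventSet (A : X →ₗ.[ℂ] X) : Set ℂ :=
  {lam | ∃ R : X →L[ℂ] X, IsResolventAt A lam R}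

/-- The spectrum `σ(A)`. -/
def spec (A : X →ₗ.[ℂ] X) : Set ℂ := (resolventSet A)ᶜ

/-- The set `iσ(A) ∩ ℝ`, viewed as a set of real numbers:  `s = i·lam` for some
`lam ∈ σ(A)` if and only if `lam = -i·s ∈ σ(A)`. -/
def bSpec (A : X →ₗ.[ℂ] X) : Set ℝ :=
  {s : ℝ | (-Complex.I * (s : ℂ)) ∈ spec A}

/-- The Fourier transform `(F a)(s) = ∫ e^{-i s t} a(t) dt` of `a ∈ L¹(ℝ)`. -/
noncomputable def FT (a : ℝ → ℂ) (s : ℝ) : ℂ :=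
  ∫ t : ℝ, Complex.exp (-(Complex.I * (s : ℂ) * (t : ℂ))) * a t

/-- `Λ` is of spectral synthesis: every `a ∈ L¹(ℝ)` whose Fourier transform vanishes
on `Λ` can be approximated in `L¹`-norm by functions whose Fourier transforms vanish
on an open neighbourhood of `Λ`. -/
def HasSpectralSynthesis (Λ : Set ℝ) : Prop :=
  ∀ a : ℝ → ℂ, MeasureTheory.Integrable a → (∀ s ∈ Λ, FT a s = 0) →
    ∀ ε : ℝ, 0 < ε → ∃ b : ℝ → ℂ, MeasureTheory.Integrable b ∧
      (∃ U : Set ℝ, IsOpen U ∧ Λ ⊆ U ∧ ∀ s ∈ U, FT b s = 0) ∧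
      (∫ t : ℝ, ‖a t - b t‖) < ε

/-- The exponential growth bound `ω₀(S)` of a function `S : (0,∞) → B(X)`,
as an extended real number. -/
noncomputable def growthBound (S : ℝ → X →L[ℂ] X) : EReal :=
  sInf {w : EReal | ∃ ω : ℝ, (ω : EReal) = w ∧
    ∃ M : ℝ, 1 ≤ M ∧ ∀ t : ℝ, 0 < t → ‖S t‖ ≤ M * Real.exp (ω * t)}

/-- The sector `Σ_θ = {λ ≠ 0 : |arg λ| < θ}`. -/
def sector (θ : ℝ) : Set ℂ := {z : ℂ | z ≠ 0 ∧ |Complex.arg z| < θ}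

/-- `S` is exponentially bounded on `Ω`. -/
def ExpBoundedOn (S : ℂ → X →L[ℂ] X) (Ω : Set ℂ) : Prop :=
  ∃ C : ℝ, 0 ≤ C ∧ ∃ ω : ℝ, ∀ z ∈ Ω, ‖S z‖ ≤ C * Real.exp (ω * ‖z‖)

/-- The non-analytic growth bound
`ζ(T) = inf {ω₀(T - S) : S ∈ H(Σ_θ; B(X)) for some θ > 0}`. -/
noncomputable def zeta (T : ℝ → X →L[ℂ] X) : EReal :=
  sInf {w : EReal | ∃ (θ : ℝ) (S : ℂ → X →L[ℂ] X), 0 < θ ∧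
    DifferentiableOn ℂ S (sector θ) ∧ ExpBoundedOn S (sector θ) ∧
    growthBound (fun t : ℝ => T t - S (t : ℂ)) = w}

/-- `T` is asymptotically analytic if `ζ(T) < 0`. -/
def AsymptoticallyAnalytic (T : ℝ → X →L[ℂ] X) : Prop := zeta T < (0 : EReal)

/-- The critical growth bound `δ(T)`: the infimum of `ω₀(T - S)` over all
exponentially bounded `S : (0,∞) → B(X)` that are norm-continuous. -/
noncomputable def delta' (T : ℝ → X →L[ℂ] X) : EReal :=
  sInf {w : EReal | ∃ S : ℝ → X →L[ℂ] X, ContinuousOn S (Set.Ioi 0) ∧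
    (∃ C : ℝ, 0 ≤ C ∧ ∃ ω : ℝ, ∀ t : ℝ, 0 < t → ‖S t‖ ≤ C * Real.exp (ω * t)) ∧
    growthBound (fun t : ℝ => T t - S t) = w}

/-- `s₀^∞(A)`: the infimum of all `α` such that the resolvent of `A` exists and is
uniformly bounded on `Q_{α,β} = {λ : Re λ ≥ α, |Im λ| ≥ β}` for some `β ≥ 0`. -/
noncomputable def s0inf (A : X →ₗ.[ℂ] X) : EReal :=
  sInf {w : EReal | ∃ α : ℝ, (α : EReal) = w ∧ ∃ β : ℝ, 0 ≤ β ∧ ∃ C : ℝ,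
    ∀ lam : ℂ, α ≤ lam.re → β ≤ |lam.im| →
      ∃ R : X →L[ℂ] X, IsResolventAt A lam R ∧ ‖R‖ ≤ C}

end KTpaper

/-!
Let `λ` be a resolvent point with `Re λ ≥ 0` and `|λ| ≥ ρ > 0`, and let `M` bound `‖T‖`. Since
`A R(1) = R(1) - 1`, one has `R(λ) = λ⁻¹ R(1) + (λ⁻¹ - 1) R(λ) A R(1)`, and the truncated Laplace
representation `R(λ) u = e^{-λb} R(λ) T(b) u + ∫₀ᵇ e^{-λr} T(r) u dr` with `u = A R(1) x` gives
`‖R(λ)‖ ≤ ‖R(1)‖/ρ + (1/ρ + 1) (ω(b) ‖R(λ)‖ + J)`, where `J` bounds the truncated integral: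
by `b ω(0)` directly, or by `‖R(1)‖ (M (1 + |λ| b) + 1)` after an integration by parts.
Choosing `b` with `(1/ρ + 1) ω(b) < 1` absorbs the `R(λ)` term.

These a priori bounds are uniform on each half-plane `Re λ > ρ`. The resolvent set is open, and a
limit of resolvent points with bounded resolvents is a resolvent point, so by connectedness each
such half-plane lies in the resolvent set; approaching `is` from the right then shows that `is` is
a resolvent point for `s ≠ 0`. The bound for `|s| ≥ 1` is the first estimate with `ρ = 1`; near
`0` one takes `b = ω*(c|s|)` in the second.
-/

namespace KTpaper

variable {X : Type*} [NormedAddCommGroup X] [NormedSpace ℂ X]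

section Semigroup

variable {T : ℝ → X →L[ℂ] X} {A : X →ₗ.[ℂ] X}

lemma IsC0Semigroup.apply_apply (hT : IsC0Semigroup T) {s t : ℝ} (hs : 0 ≤ s) (ht : 0 ≤ t)
    (x : X) : T s (T t x) = T (s + t) x := by
  rw [hT.map_add s t hs ht]; rfl

lemma IsGenerator.exists_semigroup_apply (hT : IsC0Semigroup T) (hA : IsGenerator T A)
    {v y : X} (h : ∃ hv : v ∈ A.domain, A ⟨v, hv⟩ = y) {r : ℝ} (hr : 0 ≤ r) :
    ∃ hv : T r v ∈ A.domain, A ⟨T r v, hv⟩ = T r y := by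
  rw [hA]
  refine (((T r).continuous.tendsto y).comp ((hA v y).mp h)).congr' ?_
  filter_upwards [self_mem_nhdsWithin] with t ht
  simp only [Function.comp_apply, map_smul, map_sub, hT.apply_apply hr ht.le,
    hT.apply_apply ht.le hr, add_comm]

lemma hasDerivWithinAt_semigroup_apply (hT : IsC0Semigroup T) (hA : IsGenerator T A)
    {v y : X} (h : ∃ hv : v ∈ A.domain, A ⟨v, hv⟩ = y) {r : ℝ} (hr : 0 ≤ r) :
    HasDerivWithinAt (fun s : ℝ => T s v) (T r y) (Ioi r) r := by
  have h0 : HasDerivWithinAt (fun t : ℝ => T t v) y (Ioi 0) 0 := by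
    refine (hasDerivWithinAt_iff_tendsto_slope' (lt_irrefl (0 : ℝ))).2
      (((hA v y).mp h).congr' (Eventually.of_forall fun t => ?_))
    simp [slope_def_module, hT.map_zero, ← Complex.coe_smul]
  have hshift : HasDerivWithinAt (fun s : ℝ => T r (T (s - r) v)) (T r y) (Ioi r) r := by
    have := h0.scomp_of_eq r (h := fun s => s - r) ((hasDerivWithinAt_id r (Ioi r)).sub_const r)
      (fun s hs => sub_pos.2 (mem_Ioi.1 hs)) (sub_self r).symm
    exact (((T r).restrictScalars ℝ).hasFDerivAt.comp_hasDerivWithinAt r this).congr_deriv (by simp)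
  refine hshift.congr (fun s hs => ?_) (by simp [hT.map_zero])
  simp only [hT.apply_apply hr (sub_nonneg.2 hs.le), add_sub_cancel]

lemma hasDerivWithinAt_exp_smul_semigroup_apply (hT : IsC0Semigroup T) (hA : IsGenerator T A)
    {v y : X} (h : ∃ hv : v ∈ A.domain, A ⟨v, hv⟩ = y) (lam : ℂ) {r : ℝ} (hr : 0 ≤ r) :
    HasDerivWithinAt (fun s : ℝ => Complex.exp (-(lam * s)) • T s v)
      (Complex.exp (-(lam * r)) • (T r y - lam • T r v)) (Ioi r) r := by
  have hexp : HasDerivAt (fun s : ℝ => Complex.exp (-(lam * s)))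
      (Complex.exp (-(lam * r)) * -lam) r := by
    have : HasDerivAt (fun z : ℂ => -(lam * z)) (-lam) r := by
      simpa using (hasDerivAt_id (r : ℂ)).const_mul (-lam)
    exact ((Complex.hasDerivAt_exp _).comp (r : ℂ) this).comp_ofReal
  refine (hexp.hasDerivWithinAt.smul (hasDerivWithinAt_semigroup_apply hT hA h hr)).congr_deriv ?_
  rw [smul_sub, smul_smul]
  module

lemma continuousOn_exp_smul_semigroup_apply (hT : IsC0Semigroup T) (lam : ℂ) (x : X) :
    ContinuousOn (fun r : ℝ => Complex.exp (-(lam * r)) • T r x) (Ici 0) :=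
  (Continuous.continuousOn (by fun_prop)).smul (hT.strongContinuity x)

end Semigroup

lemma norm_exp_neg_mul_le_one {lam : ℂ} (hre : 0 ≤ lam.re) {r : ℝ} (hr : 0 ≤ r) :
    ‖Complex.exp (-(lam * r))‖ ≤ 1 := by
  rw [Complex.norm_exp, Real.exp_le_one_iff]
  simpa using mul_nonneg hre hr

section Resolvent

variable {T : ℝ → X →L[ℂ] X} {A : X →ₗ.[ℂ] X} {lam : ℂ} {R : X →L[ℂ] X}

lemma IsResolventAt.exists_generator_apply (hR : IsResolventAt A lam R) (x : X) :
    ∃ hx : R x ∈ A.domain, A ⟨R x, hx⟩ = lam • R x - x := by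
  obtain ⟨hx, h⟩ := hR.1 x
  exact ⟨hx, eq_sub_of_add_eq (sub_eq_iff_eq_add'.1 h).symm⟩

lemma IsResolventAt.apply_generator (hR : IsResolventAt A lam R) (u : A.domain) :
    R (A u) = lam • R u - u := by
  have h := hR.2 u
  rw [map_sub, map_smul] at h
  exact eq_sub_of_add_eq (sub_eq_iff_eq_add'.1 h).symm

lemma IsResolventAt.semigroup_apply_comm (hT : IsC0Semigroup T) (hA : IsGenerator T A)
    (hR : IsResolventAt A lam R) {r : ℝ} (hr : 0 ≤ r) (x : X) :
    T r (R x) = R (T r x) := by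
  obtain ⟨hdom, hval⟩ := hA.exists_semigroup_apply hT (hR.exists_generator_apply x) hr
  calc T r (R x) = R (lam • T r (R x) - A ⟨T r (R x), hdom⟩) := (hR.2 ⟨T r (R x), hdom⟩).symm
    _ = R (T r x) := by rw [hval, map_sub (T r), map_smul (T r), sub_sub_cancel]

lemma IsResolventAt.eq_inv_smul_add_smul {R1 : X →L[ℂ] X} (hR : IsResolventAt A lam R)
    (hR1 : IsResolventAt A 1 R1) (hlam : lam ≠ 0) (x : X) :
    R x = lam⁻¹ • R1 x + (lam⁻¹ - 1) • R (R1 x - x) := by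
  obtain ⟨hx, hAx⟩ := hR1.exists_generator_apply x
  have h := hR.apply_generator ⟨R1 x, hx⟩
  rw [hAx] at h
  change R (1 • R1 x - x) = lam • R (R1 x) - R1 x at h
  rw [one_smul] at h
  have hx' : R x = R (R1 x) - R (R1 x - x) := by rw [map_sub, sub_sub_cancel]
  rw [hx', h, smul_sub, sub_smul, sub_smul, smul_smul, inv_mul_cancel₀ hlam]
  module

end Resolvent

section Laplace

variable {T : ℝ → X →L[ℂ] X} {lam : ℂ} {b : ℝ}

noncomputable def partialLaplace (T : ℝ → X →L[ℂ] X) (lam : ℂ) (b : ℝ) (x : X) : X :=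
  ∫ r in (0 : ℝ)..b, Complex.exp (-(lam * r)) • T r x

lemma intervalIntegrable_exp_smul_semigroup_apply (hT : IsC0Semigroup T) (lam : ℂ) (x : X)
    (hb : 0 ≤ b) :
    IntervalIntegrable (fun r : ℝ => Complex.exp (-(lam * r)) • T r x) volume 0 b :=
  ((continuousOn_exp_smul_semigroup_apply hT lam x).mono
    (by rw [uIcc_of_le hb]; exact Icc_subset_Ici_self)).intervalIntegrable

lemma partialLaplace_smul (c : ℂ) (x : X) :
    partialLaplace T lam b (c • x) = c • partialLaplace T lam b x := by
  simp only [partialLaplace, map_smul, smul_comm _ c, intervalIntegral.integral_smul]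

lemma partialLaplace_sub (hT : IsC0Semigroup T) (hb : 0 ≤ b) (x y : X) :
    partialLaplace T lam b (x - y) = partialLaplace T lam b x - partialLaplace T lam b y := by
  simp only [partialLaplace, map_sub, smul_sub]
  exact intervalIntegral.integral_sub (intervalIntegrable_exp_smul_semigroup_apply hT lam x hb)
    (intervalIntegrable_exp_smul_semigroup_apply hT lam y hb)

lemma norm_partialLaplace_le (hre : 0 ≤ lam.re) (hb : 0 ≤ b) {x : X} {C : ℝ}
    (hC : ∀ r ∈ Icc 0 b, ‖T r x‖ ≤ C) : ‖partialLaplace T lam b x‖ ≤ C * b := by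
  have := intervalIntegral.norm_integral_le_of_norm_le_const
    (f := fun r : ℝ => Complex.exp (-(lam * r)) • T r x) (a := 0) (b := b) (C := C) fun r hr => by
      rw [uIoc_of_le hb] at hr
      rw [norm_smul]
      exact (mul_le_of_le_one_left (norm_nonneg _) (norm_exp_neg_mul_le_one hre hr.1.le)).trans
        (hC r (Ioc_subset_Icc_self hr))
  simpa [partialLaplace, abs_of_nonneg hb] using this

variable [CompleteSpace X] {A : X →ₗ.[ℂ] X}

lemma partialLaplace_generator (hT : IsC0Semigroup T) (hA : IsGenerator T A) {v y : X}
    (h : ∃ hv : v ∈ A.domain, A ⟨v, hv⟩ = y) (lam : ℂ) (hb : 0 ≤ b) :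
    partialLaplace T lam b y
      = Complex.exp (-(lam * b)) • T b v - v + lam • partialLaplace T lam b v := by
  have hftc := intervalIntegral.integral_eq_sub_of_hasDeriv_right_of_le hb
    ((continuousOn_exp_smul_semigroup_apply hT lam v).mono Icc_subset_Ici_self)
    (fun r hr => (hasDerivWithinAt_exp_smul_semigroup_apply hT hA h lam hr.1.le).congr_deriv
      (by rw [map_sub, map_smul]))
    (intervalIntegrable_exp_smul_semigroup_apply hT lam (y - lam • v) hb)
  change partialLaplace T lam b (y - lam • v) = _ at hftc
  rw [partialLaplace_sub hT hb, partialLaplace_smul] at hftc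
  simp only [Complex.ofReal_zero, mul_zero, neg_zero, Complex.exp_zero, one_smul,
    hT.map_zero, one_apply_eq_self] at hftc
  linear_combination (norm := module) hftc

variable {R : X →L[ℂ] X}

lemma IsResolventAt.eq_exp_smul_add_partialLaplace (hT : IsC0Semigroup T)
    (hA : IsGenerator T A) (hR : IsResolventAt A lam R) (u : X) (hb : 0 ≤ b) :
    R u = Complex.exp (-(lam * b)) • R (T b u) + partialLaplace T lam b u := by
  have h := partialLaplace_generator hT hA (hR.exists_generator_apply u) lam hb
  rw [partialLaplace_sub hT hb, partialLaplace_smul, hR.semigroup_apply_comm hT hA hb] at h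
  linear_combination (norm := module) h

end Laplace

section ResolventSet

variable [CompleteSpace X] {A : X →ₗ.[ℂ] X} {lam μ : ℂ} {R : X →L[ℂ] X}

lemma IsResolventAt.mem_resolventSet_of_norm_sub_mul_lt_one (hR : IsResolventAt A lam R)
    (h : ‖μ - lam‖ * ‖R‖ < 1) : μ ∈ resolventSet A := by
  -- `R(μ) = R(λ) (1 - (λ - μ) R(λ))⁻¹`
  set t : X →L[ℂ] X := (lam - μ) • R
  have ht : ‖t‖ < 1 := (ContinuousLinearMap.opNorm_smul_le _ _).trans_lt (by rwa [norm_sub_rev])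
  set u := Units.oneSub t ht
  set S : X →L[ℂ] X := ↑u⁻¹
  have hu : ∀ x, (u : X →L[ℂ] X) x = x - (lam - μ) • R x := fun x => by simp [u, t]
  have huS : ∀ x, (u : X →L[ℂ] X) (S x) = x := fun x => congrArg (fun f => f x) u.mul_inv
  have hSu : ∀ x, S ((u : X →L[ℂ] X) x) = x := fun x => congrArg (fun f => f x) u.inv_mul
  have hcomm : Commute R S := Commute.units_inv_right (by
    rw [Units.val_oneSub]; exact (Commute.one_right R).sub_right ((Commute.refl R).smul_right _))
  refine ⟨R * S, fun x => ?_, fun x => ?_⟩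
  · obtain ⟨hx, hAx⟩ := hR.exists_generator_apply (S x)
    refine ⟨hx, ?_⟩
    change μ • R (S x) - A ⟨R (S x), hx⟩ = x
    refine (?_ : _ = (u : X →L[ℂ] X) (S x)).trans (huS x)
    rw [hAx, hu]
    module
  · have hRx : R (μ • (x : X) - A x) = (u : X →L[ℂ] X) x := by
      rw [hu, show μ • (x : X) - A x = (lam • (x : X) - A x) - (lam - μ) • (x : X) by module,
        map_sub, map_smul, hR.2 x]
    rw [hcomm.eq]
    change S (R (μ • (x : X) - A x)) = x
    rw [hRx, hSu]

lemma IsResolventAt.mem_resolventSet_of_dist_lt (hR : IsResolventAt A lam R) {K : ℝ}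
    (hRK : ‖R‖ ≤ K) (hμ : dist μ lam < (K + 1)⁻¹) : μ ∈ resolventSet A := by
  have hK : 0 < K + 1 := by linarith [norm_nonneg R]
  refine hR.mem_resolventSet_of_norm_sub_mul_lt_one ?_
  rw [← dist_eq_norm]
  calc dist μ lam * ‖R‖ ≤ dist μ lam * (K + 1) := by gcongr; linarith
    _ < (K + 1)⁻¹ * (K + 1) := by gcongr
    _ = 1 := inv_mul_cancel₀ hK.ne'

lemma isOpen_resolventSet : IsOpen (resolventSet A) :=
  Metric.isOpen_iff.2 fun _ ⟨R, hR⟩ =>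
    ⟨(‖R‖ + 1)⁻¹, by positivity, fun _ hμ => hR.mem_resolventSet_of_dist_lt le_rfl hμ⟩

lemma mem_resolventSet_of_mem_closure {B : ℝ}
    (h : μ ∈ closure {lam | ∃ R, IsResolventAt A lam R ∧ ‖R‖ ≤ B}) : μ ∈ resolventSet A := by
  obtain ⟨lam, ⟨R, hR, hRB⟩, hdist⟩ := Metric.mem_closure_iff.1 h (|B| + 1)⁻¹ (by positivity)
  exact hR.mem_resolventSet_of_dist_lt (hRB.trans (le_abs_self B)) hdist

lemma subset_resolventSet_of_isPreconnected {U : Set ℂ} (hU : IsOpen U)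
    (hUc : IsPreconnected U) (hne : (U ∩ resolventSet A).Nonempty) {C : ℝ}
    (hC : ∀ lam ∈ U, ∀ R, IsResolventAt A lam R → ‖R‖ ≤ C) : U ⊆ resolventSet A := by
  refine hUc.subset_of_closure_inter_subset isOpen_resolventSet hne fun μ ⟨hμ, hμU⟩ => ?_
  refine mem_resolventSet_of_mem_closure (B := C) (closure_mono ?_ (hU.inter_closure ⟨hμU, hμ⟩))
  rintro lam ⟨hlamU, R, hR⟩
  exact ⟨R, hR, hC lam hlamU R hR⟩

end ResolventSet

section APriori

variable {T : ℝ → X →L[ℂ] X} {A : X →ₗ.[ℂ] X} {R1 R : X →L[ℂ] X} {ω : ℝ → ℝ} {lam : ℂ} {b : ℝ}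

lemma norm_semigroup_apply_sub_le (hω_dom : ∀ t : ℝ, 0 ≤ t → ‖(T t).comp (R1 - 1)‖ ≤ ω t)
    {r : ℝ} (hr : 0 ≤ r) (x : X) : ‖T r (R1 x - x)‖ ≤ ω r * ‖x‖ :=
  ((T r).comp (R1 - 1)).le_of_opNorm_le (hω_dom r hr) x

lemma norm_partialLaplace_sub_le_of_antitoneOn
    (hω_anti : AntitoneOn ω (Ici 0)) (hω_dom : ∀ t : ℝ, 0 ≤ t → ‖(T t).comp (R1 - 1)‖ ≤ ω t)
    (hre : 0 ≤ lam.re) (hb : 0 ≤ b) (x : X) :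
    ‖partialLaplace T lam b (R1 x - x)‖ ≤ b * ω 0 * ‖x‖ := by
  refine (norm_partialLaplace_le (C := ω 0 * ‖x‖) hre hb fun r hr => ?_).trans_eq (by ring)
  exact (norm_semigroup_apply_sub_le hω_dom hr.1 x).trans
    (by gcongr; exact hω_anti self_mem_Ici hr.1 hr.1)

variable [CompleteSpace X]

lemma norm_partialLaplace_sub_le_of_bounded (hT : IsC0Semigroup T) (hA : IsGenerator T A)
    (hR1 : IsResolventAt A 1 R1) {M : ℝ} (hM : ∀ t : ℝ, 0 ≤ t → ‖T t‖ ≤ M)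
    (hre : 0 ≤ lam.re) (hb : 0 ≤ b) (x : X) :
    ‖partialLaplace T lam b (R1 x - x)‖ ≤ ‖R1‖ * (M * (1 + ‖lam‖ * b) + 1) * ‖x‖ := by
  obtain ⟨hx, hAx⟩ := hR1.exists_generator_apply x
  rw [one_smul] at hAx
  have hM0 : 0 ≤ M := (norm_nonneg _).trans (hM 0 le_rfl)
  have hTR1 : ∀ r ∈ Icc 0 b, ‖T r (R1 x)‖ ≤ M * (‖R1‖ * ‖x‖) := fun r hr =>
    ((T r).le_of_opNorm_le (hM r hr.1) _).trans (by gcongr; exact R1.le_opNorm x)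
  rw [partialLaplace_generator hT hA ⟨hx, hAx⟩ lam hb]
  calc ‖Complex.exp (-(lam * b)) • T b (R1 x) - R1 x + lam • partialLaplace T lam b (R1 x)‖
      ≤ ‖T b (R1 x)‖ + ‖R1 x‖ + ‖lam‖ * ‖partialLaplace T lam b (R1 x)‖ := by
        refine (norm_add_le _ _).trans (add_le_add ((norm_sub_le _ _).trans ?_) (norm_smul _ _).le)
        rw [norm_smul]
        gcongr
        exact mul_le_of_le_one_left (norm_nonneg _) (norm_exp_neg_mul_le_one hre hb)
    _ ≤ M * (‖R1‖ * ‖x‖) + ‖R1‖ * ‖x‖ + ‖lam‖ * (M * (‖R1‖ * ‖x‖) * b) := by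
        gcongr
        exacts [hTR1 b ⟨hb, le_rfl⟩, R1.le_opNorm x, norm_partialLaplace_le hre hb hTR1]
    _ = ‖R1‖ * (M * (1 + ‖lam‖ * b) + 1) * ‖x‖ := by ring

lemma norm_resolvent_le_of_partialLaplace_le (hT : IsC0Semigroup T) (hA : IsGenerator T A)
    (hR1 : IsResolventAt A 1 R1) (hω_dom : ∀ t : ℝ, 0 ≤ t → ‖(T t).comp (R1 - 1)‖ ≤ ω t)
    (hre : 0 ≤ lam.re) {ρ : ℝ} (hρ : 0 < ρ) (hρlam : ρ ≤ ‖lam‖) (hR : IsResolventAt A lam R)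
    (hb : 0 ≤ b) {J : ℝ} (hJ0 : 0 ≤ J) (hJ : ∀ x, ‖partialLaplace T lam b (R1 x - x)‖ ≤ J * ‖x‖)
    {θ : ℝ} (hθ : (1 / ρ + 1) * ω b ≤ θ) (hθ1 : θ < 1) :
    ‖R‖ ≤ (1 - θ)⁻¹ * (‖R1‖ / ρ + (1 / ρ + 1) * J) := by
  have hlam : lam ≠ 0 := norm_pos_iff.1 (hρ.trans_le hρlam)
  have hinv : ‖lam⁻¹‖ ≤ 1 / ρ := by rw [norm_inv, one_div]; exact inv_anti₀ hρ hρlam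
  have hq : ‖lam⁻¹ - 1‖ ≤ 1 / ρ + 1 := (norm_sub_le _ _).trans (by simpa using hinv)
  have hωb : 0 ≤ ω b := (norm_nonneg _).trans (hω_dom b hb)
  have hpt : ∀ x, ‖R x‖ ≤ (‖R1‖ / ρ + (1 / ρ + 1) * (ω b * ‖R‖ + J)) * ‖x‖ := by
    intro x
    have hRA : ‖R (R1 x - x)‖ ≤ (ω b * ‖R‖ + J) * ‖x‖ := by
      rw [hR.eq_exp_smul_add_partialLaplace hT hA (R1 x - x) hb]
      refine (norm_add_le _ _).trans ?_
      rw [norm_smul]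
      calc _ ≤ 1 * (‖R‖ * (ω b * ‖x‖)) + J * ‖x‖ := by
            gcongr
            exacts [norm_exp_neg_mul_le_one hre hb, R.le_of_opNorm_le le_rfl _ |>.trans
              (by gcongr; exact norm_semigroup_apply_sub_le hω_dom hb x), hJ x]
        _ = _ := by ring
    rw [hR.eq_inv_smul_add_smul hR1 hlam x]
    calc _ ≤ ‖lam⁻¹‖ * ‖R1 x‖ + ‖lam⁻¹ - 1‖ * ‖R (R1 x - x)‖ := by
          rw [← norm_smul, ← norm_smul]; exact norm_add_le _ _
      _ ≤ 1 / ρ * (‖R1‖ * ‖x‖) + (1 / ρ + 1) * ((ω b * ‖R‖ + J) * ‖x‖) := by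
          gcongr
          exact R1.le_opNorm x
      _ = _ := by ring
  have hR_le := R.opNorm_le_bound (by positivity) hpt
  rw [le_inv_mul_iff₀ (by linarith)]
  nlinarith [mul_le_mul_of_nonneg_right hθ (norm_nonneg R)]

end APriori

section Spectrum

variable [CompleteSpace X] {T : ℝ → X →L[ℂ] X} {A : X →ₗ.[ℂ] X} {R1 R : X →L[ℂ] X}
  {ω : ℝ → ℝ} {lam : ℂ} {b : ℝ}

lemma norm_resolvent_le_of_le_norm (hT : IsC0Semigroup T) (hA : IsGenerator T A)
    (hR1 : IsResolventAt A 1 R1) (hω_anti : AntitoneOn ω (Ici 0))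
    (hω_dom : ∀ t : ℝ, 0 ≤ t → ‖(T t).comp (R1 - 1)‖ ≤ ω t) (hre : 0 ≤ lam.re)
    {ρ : ℝ} (hρ : 0 < ρ) (hρlam : ρ ≤ ‖lam‖) (hR : IsResolventAt A lam R) (hb : 0 ≤ b)
    (hωb : ω b ≤ ρ / (2 * (1 + ρ))) :
    ‖R‖ ≤ 2 * (‖R1‖ / ρ + (1 / ρ + 1) * (b * ω 0)) := by
  have hθ : (1 / ρ + 1) * ω b ≤ 1 / 2 := by
    calc (1 / ρ + 1) * ω b ≤ (1 / ρ + 1) * (ρ / (2 * (1 + ρ))) := by gcongr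
      _ = 1 / 2 := by field_simp
  have hω0 : 0 ≤ ω 0 := (norm_nonneg _).trans (hω_dom 0 le_rfl)
  have := norm_resolvent_le_of_partialLaplace_le hT hA hR1 hω_dom hre hρ hρlam hR hb
    (by positivity) (norm_partialLaplace_sub_le_of_antitoneOn hω_anti hω_dom hre hb) hθ
    (by norm_num)
  rwa [show (1 - 1 / 2 : ℝ)⁻¹ = 2 by norm_num] at this

lemma mem_resolventSet_of_re_pos (hT : IsC0Semigroup T) (hA : IsGenerator T A)
    (hR1 : IsResolventAt A 1 R1) (hω_anti : AntitoneOn ω (Ici 0))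
    (hω_dom : ∀ t : ℝ, 0 ≤ t → ‖(T t).comp (R1 - 1)‖ ≤ ω t)
    (hω_small : ∀ δ > 0, ∃ b, 0 ≤ b ∧ ω b ≤ δ) {μ : ℂ} (hμ : 0 < μ.re) :
    μ ∈ resolventSet A := by
  obtain ⟨ρ, hρ, hρ1, hρμ⟩ : ∃ ρ : ℝ, 0 < ρ ∧ ρ < 1 ∧ ρ < μ.re :=
    ⟨min μ.re 1 / 2, by positivity, by linarith [min_le_right μ.re 1],
      by linarith [min_le_left μ.re 1, lt_min hμ one_pos]⟩
  obtain ⟨b, hb, hωb⟩ := hω_small (ρ / (2 * (1 + ρ))) (by positivity)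
  refine subset_resolventSet_of_isPreconnected (U := {lam : ℂ | ρ < lam.re})
    (isOpen_lt continuous_const Complex.continuous_re) (convex_halfSpace_re_gt ρ).isPreconnected
    ⟨1, by simpa using hρ1, R1, hR1⟩ (fun lam hlam R hR => norm_resolvent_le_of_le_norm hT hA hR1
      hω_anti hω_dom (hρ.trans hlam).le hρ (hlam.le.trans (Complex.re_le_norm lam)) hR hb hωb) hρμ

lemma mem_resolventSet_I_mul (hT : IsC0Semigroup T) (hA : IsGenerator T A)
    (hR1 : IsResolventAt A 1 R1) (hω_anti : AntitoneOn ω (Ici 0))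
    (hω_dom : ∀ t : ℝ, 0 ≤ t → ‖(T t).comp (R1 - 1)‖ ≤ ω t)
    (hω_small : ∀ δ > 0, ∃ b, 0 ≤ b ∧ ω b ≤ δ) {s : ℝ} (hs : s ≠ 0) :
    Complex.I * s ∈ resolventSet A := by
  have hs0 : 0 < |s| := abs_pos.2 hs
  obtain ⟨b, hb, hωb⟩ := hω_small (|s| / (2 * (1 + |s|))) (by positivity)
  have hlim : Tendsto (fun ε : ℝ => (ε : ℂ) + Complex.I * s) (𝓝[>] 0) (𝓝 (Complex.I * s)) := by
    have : Continuous (fun ε : ℝ => (ε : ℂ) + Complex.I * s) := by fun_prop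
    simpa using (this.continuousAt (x := 0)).tendsto.mono_left nhdsWithin_le_nhds
  refine mem_resolventSet_of_mem_closure (B := 2 * (‖R1‖ / |s| + (1 / |s| + 1) * (b * ω 0)))
    (mem_closure_of_tendsto hlim (eventually_nhdsWithin_of_forall fun ε hε => ?_))
  have hre : 0 < ((ε : ℂ) + Complex.I * s).re := by simpa using hε
  obtain ⟨R, hR⟩ := mem_resolventSet_of_re_pos hT hA hR1 hω_anti hω_dom hω_small hre
  have hnorm : |s| ≤ ‖(ε : ℂ) + Complex.I * s‖ := by
    simpa using Complex.abs_im_le_norm ((ε : ℂ) + Complex.I * s)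
  exact ⟨R, hR, norm_resolvent_le_of_le_norm hT hA hR1 hω_anti hω_dom hre.le hs0 hnorm hR hb hωb⟩

lemma norm_resolvent_I_mul_le (hT : IsC0Semigroup T) (hA : IsGenerator T A)
    (hR1 : IsResolventAt A 1 R1) (hω_dom : ∀ t : ℝ, 0 ≤ t → ‖(T t).comp (R1 - 1)‖ ≤ ω t)
    {M : ℝ} (hM : ∀ t : ℝ, 0 ≤ t → ‖T t‖ ≤ M) {c s : ℝ} (hc0 : 0 < c) (hc1 : c < 1)
    (hs0 : 0 < |s|) (hsδ : |s| ≤ min 1 ((1 - c) / (2 * c)))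
    (hR : IsResolventAt A (Complex.I * s) R) (hb : 0 ≤ b) (hωb : ω b ≤ c * |s|) :
    ‖R‖ ≤ 2 * ‖R1‖ * (2 * M + 3) / (1 - c) * (1 / |s| + b) := by
  have hs1 : |s| ≤ 1 := hsδ.trans (min_le_left _ _)
  have hsc : c * |s| ≤ (1 - c) / 2 := by
    have := hsδ.trans (min_le_right _ _)
    rw [le_div_iff₀ (by positivity)] at this
    linarith
  have hnorm : ‖Complex.I * s‖ = |s| := by simp
  have hM0 : 0 ≤ M := (norm_nonneg _).trans (hM 0 le_rfl)
  have hθ : (1 / |s| + 1) * ω b ≤ (1 + c) / 2 := by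
    calc (1 / |s| + 1) * ω b ≤ (1 / |s| + 1) * (c * |s|) := by gcongr
      _ = c + c * |s| := by field_simp
      _ ≤ (1 + c) / 2 := by linarith
  have h := norm_resolvent_le_of_partialLaplace_le hT hA hR1 hω_dom (by simp) hs0 hnorm.ge hR hb
    (by positivity) (norm_partialLaplace_sub_le_of_bounded hT hA hR1 hM (by simp) hb) hθ
    (by linarith)
  rw [hnorm] at h
  refine h.trans ?_
  rw [show 1 - (1 + c) / 2 = (1 - c) / 2 by ring, inv_div, div_mul_eq_mul_div, div_mul_eq_mul_div,
    div_le_div_iff_of_pos_right (by linarith)]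
  have hs' : 1 ≤ 1 / |s| := by rw [le_div_iff₀ hs0]; linarith
  have key : (1 / |s| + 1) * (M * (1 + |s| * b) + 1) ≤ (2 * M + 2) * (1 / |s|) + 2 * M * b := by
    have : (1 / |s| + 1) * (1 + |s| * b) = 1 / |s| + 1 + b + |s| * b := by field_simp; ring
    nlinarith [mul_le_mul_of_nonneg_left hs1 (mul_nonneg hM0 hb)]
  calc 2 * (‖R1‖ / |s| + (1 / |s| + 1) * (‖R1‖ * (M * (1 + |s| * b) + 1)))
      = 2 * ‖R1‖ * (1 / |s| + (1 / |s| + 1) * (M * (1 + |s| * b) + 1)) := by ring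
    _ ≤ 2 * ‖R1‖ * (1 / |s| + ((2 * M + 2) * (1 / |s|) + 2 * M * b)) := by gcongr
    _ ≤ 2 * ‖R1‖ * (2 * M + 3) * (1 / |s| + b) := by
        rw [mul_assoc _ (2 * M + 3)]
        gcongr
        nlinarith

end Spectrum

theorem resolvent_bound_from_decay_general
    {X : Type*} [NormedAddCommGroup X] [NormedSpace ℂ X] [CompleteSpace X]
    (T : ℝ → X →L[ℂ] X) (A : X →ₗ.[ℂ] X)
    (hT : IsC0Semigroup T) (hTb : IsBoundedSG T) (hA : IsGenerator T A)
    (R1 : X →L[ℂ] X) (hR1 : IsResolventAt A 1 R1)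
    (ω : ℝ → ℝ)
    (hω_anti : AntitoneOn ω (Set.Ici (0 : ℝ)))
    (hω_dom : ∀ t : ℝ, 0 ≤ t → ‖(T t).comp (R1 - 1)‖ ≤ ω t)
    (ωstar : ℝ → ℝ)
    (hωstar : ∀ s : ℝ, 0 < s →
      0 ≤ ωstar s ∧ ω (ωstar s) ≤ s ∧ ∀ t : ℝ, 0 ≤ t → ω t ≤ s → ωstar s ≤ t) :
    bSpec A ⊆ {0} ∧
    (∃ C : ℝ, ∀ s : ℝ, 1 ≤ |s| →
      ∃ R : X →L[ℂ] X, IsResolventAt A (Complex.I * (s : ℂ)) R ∧ ‖R‖ ≤ C) ∧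
    (∀ c : ℝ, 0 < c → c < 1 →
      ∃ K : ℝ, 0 < K ∧ ∃ δ : ℝ, 0 < δ ∧ ∀ s : ℝ, 0 < |s| → |s| < δ →
        ∃ R : X →L[ℂ] X, IsResolventAt A (Complex.I * (s : ℂ)) R ∧
          ‖R‖ ≤ K * (1 / |s| + ωstar (c * |s|))) := by
  obtain ⟨M, hM⟩ := hTb
  have hω_small : ∀ δ > 0, ∃ b, 0 ≤ b ∧ ω b ≤ δ := fun δ hδ =>
    ⟨ωstar δ, (hωstar δ hδ).1, (hωstar δ hδ).2.1⟩
  have hmem {s : ℝ} (hs : 0 < |s|) : Complex.I * s ∈ resolventSet A :=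
    mem_resolventSet_I_mul hT hA hR1 hω_anti hω_dom hω_small (abs_pos.1 hs)
  refine ⟨fun s hs => ?_, ?_, fun c hc0 hc1 => ?_⟩
  · by_contra hs0
    refine hs (?_ : -Complex.I * s ∈ resolventSet A)
    simpa using hmem (s := -s) (by simpa using hs0)
  · obtain ⟨b, hb, hωb⟩ := hω_small (1 / 4) (by norm_num)
    refine ⟨2 * (‖R1‖ / 1 + (1 / 1 + 1) * (b * ω 0)), fun s hs => ?_⟩
    obtain ⟨R, hR⟩ := hmem (one_pos.trans_le hs)
    exact ⟨R, hR, norm_resolvent_le_of_le_norm hT hA hR1 hω_anti hω_dom (by simp) one_pos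
      (by simpa using hs) hR hb (by norm_num [hωb])⟩
  · have hM0 : 0 ≤ M := (norm_nonneg _).trans (hM 0 le_rfl)
    have hK : 0 ≤ 2 * ‖R1‖ * (2 * M + 3) / (1 - c) :=
      div_nonneg (mul_nonneg (by positivity) (by linarith)) (by linarith)
    have hδ : 0 < (1 - c) / (2 * c) := div_pos (by linarith) (by positivity)
    refine ⟨_, hK.trans_lt (lt_add_one _), min 1 ((1 - c) / (2 * c)), lt_min one_pos hδ,
      fun s hs0 hsδ => ?_⟩
    obtain ⟨R, hR⟩ := hmem hs0
    obtain ⟨hb, hωb, -⟩ := hωstar (c * |s|) (by positivity)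
    refine ⟨R, hR, (norm_resolvent_I_mul_le hT hA hR1 hω_dom hM hc0 hc1 hs0 hsδ.le hR hb
      hωb).trans ?_⟩
    gcongr
    linarith

/-- **Theorem 2.2.**  Let `T` be a bounded C₀-semigroup with generator `A`, let
`R1 = R(1, A)` (so that `A R(1,A) = R1 - 1`), and let `ω` be a dominating function
for `T`, i.e. `ω` is decreasing, positive and `‖T(t) A R(1,A)‖ ≤ ω(t)` for `t ≥ 0`,
with `ω(t) → 0` as `t → ∞`.  Let `ωstar` be the function
`ω*(s) = min {t ≥ 0 : ω(t) ≤ s}`.  Then `iσ(A) ∩ ℝ ⊆ {0}`, the resolvent exists and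
is uniformly bounded on `{is : |s| ≥ 1}`, and for every `c ∈ (0,1)` one has
`‖R(is, A)‖ = O(1/|s| + ω*(c|s|))` as `s → 0`. -/
theorem resolvent_bound_from_decay
    {X : Type*} [NormedAddCommGroup X] [NormedSpace ℂ X] [CompleteSpace X]
    (T : ℝ → X →L[ℂ] X) (A : X →ₗ.[ℂ] X)
    (hT : IsC0Semigroup T) (hTb : IsBoundedSG T) (hA : IsGenerator T A)
    (R1 : X →L[ℂ] X) (hR1 : IsResolventAt A 1 R1)
    (ω : ℝ → ℝ)
    (hω_anti : AntitoneOn ω (Set.Ici (0 : ℝ)))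
    (hω_pos : ∀ t : ℝ, 0 ≤ t → 0 < ω t)
    (hω_dom : ∀ t : ℝ, 0 ≤ t → ‖(T t).comp (R1 - 1)‖ ≤ ω t)
    (hω_lim : Filter.Tendsto ω Filter.atTop (nhds 0))
    (ωstar : ℝ → ℝ)
    (hωstar : ∀ s : ℝ, 0 < s →
      0 ≤ ωstar s ∧ ω (ωstar s) ≤ s ∧ ∀ t : ℝ, 0 ≤ t → ω t ≤ s → ωstar s ≤ t) :
    bSpec A ⊆ {0} ∧
    (∃ C : ℝ, ∀ s : ℝ, 1 ≤ |s| →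
      ∃ R : X →L[ℂ] X, IsResolventAt A (Complex.I * (s : ℂ)) R ∧ ‖R‖ ≤ C) ∧
    (∀ c : ℝ, 0 < c → c < 1 →
      ∃ K : ℝ, 0 < K ∧ ∃ δ : ℝ, 0 < δ ∧ ∀ s : ℝ, 0 < |s| → |s| < δ →
        ∃ R : X →L[ℂ] X, IsResolventAt A (Complex.I * (s : ℂ)) R ∧
          ‖R‖ ≤ K * (1 / |s| + ωstar (c * |s|))) :=
  resolvent_bound_from_decay_general T A hT hTb hA R1 hR1 ω hω_anti hω_dom ωstar hωstar

end KTpaper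
end

section
/- Let X be a complex Banach space and let T be a bounded C₀-semigroup on X with generator A. Suppose that iσ(A) ∩ ℝ = {0} and that lim_{s→0} max{‖s R(is, A)‖, ‖s R(−is, A)‖} = ∞. Let m be the minimal dominating function for the resolvent of A, given by m(s) = sup{‖R(ir, A)‖ : s ≤ |r| ≤ 1} for s ∈ (0, 1]. Then, for any right-inverse m^{−1} of m, there exist constants c, C > 0 such that ‖T(t) A R(1, A)‖ ≥ c m^{−1}(C t) for all sufficiently large t ≥ 0. -/
open Filter Topology MeasureTheory Set

/-!
Write `M` for a bound of `T` and `K = ‖R(1, A)‖`. For `ir ∈ ρ(A)` the truncated Laplace transform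
gives `R(ir) w = ∫₀ᵗ e^{-irτ} T(τ) w dτ + e^{-irt} T(t) R(ir) w`. Taking `w = A R(1, A) z` and
integrating by parts once more bounds the integral by `(M + 1 + |r| t M) K ‖z‖`, so
`‖R(ir) A R(1, A)‖ ≤ (M + 1 + |r| t M) K + ‖R(ir)‖ ‖T(t) A R(1, A)‖`, while the resolvent identity
gives `‖R(ir) A R(1, A)‖ ≥ |r| ‖R(ir)‖ / 2 - K`. Hence `‖T(t) A R(1, A)‖ < s / 4` forces
`m(s) ≤ 4 ((M + 2) K / s + M K t)`. For `s = m⁻¹(C t)` with `C = 8 M K + 1` this bounds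
`s m(s) = C s t` by a constant, while `s → 0` as `t → ∞`, contradicting `s m(s) → ∞`.
That `C t` lies in the range of `m` at all follows from the continuity of `r ↦ ‖R(ir, A)‖`,
again a consequence of the resolvent identity.
-/

open scoped Complex

namespace KTpaper

variable {X : Type*} [NormedAddCommGroup X] [NormedSpace ℂ X]

namespace IsResolventAt

variable {A : X →ₗ.[ℂ] X} {lam mu : ℂ} {R R' R1 : X →L[ℂ] X}

theorem mem_domain (hR : IsResolventAt A lam R) (x : X) : R x ∈ A.domain :=
  (hR.1 x).choose

theorem apply_eq (hR : IsResolventAt A lam R) (x : X) (hx : R x ∈ A.domain) :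
    A ⟨R x, hx⟩ = lam • R x - x := by
  obtain ⟨_, h⟩ := hR.1 x
  linear_combination (norm := module) -h

theorem sub_eq (hR : IsResolventAt A lam R) (hR' : IsResolventAt A mu R') :
    R' - R = (lam - mu) • R.comp R' := by
  ext z
  have hv := hR'.mem_domain z
  have h := hR.2 ⟨R' z, hv⟩
  simp only [hR'.apply_eq z hv] at h
  have e : lam • R' z - (mu • R' z - z) = (lam - mu) • R' z + z := by module
  rw [e, map_add, map_smul] at h
  exact sub_eq_of_eq_add h.symm

theorem norm_sub_le (hR : IsResolventAt A lam R) (hR' : IsResolventAt A mu R') :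
    ‖R' - R‖ ≤ ‖lam - mu‖ * (‖R‖ * ‖R'‖) := by
  rw [hR.sub_eq hR', norm_smul]
  gcongr
  exact R.opNorm_comp_le R'

theorem norm_sub_le_of_small (hR : IsResolventAt A lam R) (hR' : IsResolventAt A mu R')
    (hsmall : ‖lam - mu‖ * ‖R‖ ≤ 1 / 2) : ‖R' - R‖ ≤ 2 * ‖lam - mu‖ * ‖R‖ ^ 2 := by
  have hdiff := hR.norm_sub_le hR'
  have hR'le : ‖R'‖ ≤ 2 * ‖R‖ := by
    have := norm_le_norm_add_norm_sub' R' R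
    nlinarith [norm_nonneg R']
  calc ‖R' - R‖ ≤ ‖lam - mu‖ * (‖R‖ * ‖R'‖) := hdiff
    _ ≤ ‖lam - mu‖ * (‖R‖ * (2 * ‖R‖)) := by gcongr
    _ = 2 * ‖lam - mu‖ * ‖R‖ ^ 2 := by ring

theorem comp_sub_one (hR : IsResolventAt A lam R) (hR1 : IsResolventAt A 1 R1) (hlam : lam ≠ 1) :
    R.comp (R1 - 1) = (lam - 1)⁻¹ • R1 - (lam * (lam - 1)⁻¹) • R := by
  have hlam' : lam - 1 ≠ 0 := sub_ne_zero.2 hlam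
  have hcomp : R.comp R1 = (lam - 1)⁻¹ • (R1 - R) := by
    rw [hR.sub_eq hR1, inv_smul_smul₀ hlam']
  have e : lam * (lam - 1)⁻¹ = (lam - 1)⁻¹ + 1 := by field_simp; ring
  rw [ContinuousLinearMap.comp_sub, ContinuousLinearMap.one_def, ContinuousLinearMap.comp_id,
    hcomp, e]
  module

theorem norm_comp_sub_one_ge (hR : IsResolventAt A lam R) (hR1 : IsResolventAt A 1 R1)
    (hre : lam.re ≤ 0) (hlam : ‖lam‖ ≤ 1) :
    ‖lam‖ / 2 * ‖R‖ - ‖R1‖ ≤ ‖R.comp (R1 - 1)‖ := by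
  have hge : 1 ≤ ‖lam - 1‖ :=
    calc 1 ≤ |(lam - 1).re| := by
          rw [Complex.sub_re, Complex.one_re, abs_of_nonpos (by linarith)]; linarith
      _ ≤ ‖lam - 1‖ := Complex.abs_re_le_norm _
  have hle : ‖lam - 1‖ ≤ 2 := (_root_.norm_sub_le lam 1).trans (by simp; linarith)
  have hu1 : ‖lam - 1‖⁻¹ ≤ 1 := inv_le_one_of_one_le₀ hge
  have hu2 : 1 / 2 ≤ ‖lam - 1‖⁻¹ := by rw [one_div]; exact inv_anti₀ (by positivity) hle
  have hne : lam ≠ 1 := fun h => by rw [h, Complex.one_re] at hre; linarith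
  rw [hR.comp_sub_one hR1 hne, norm_sub_rev]
  refine le_trans ?_ (norm_sub_norm_le _ _)
  rw [norm_smul, norm_smul, norm_mul, norm_inv]
  have h1 : ‖lam‖ / 2 * ‖R‖ ≤ ‖lam‖ * ‖lam - 1‖⁻¹ * ‖R‖ := by
    rw [div_eq_mul_one_div]; gcongr
  have h2 : ‖lam - 1‖⁻¹ * ‖R1‖ ≤ ‖R1‖ := mul_le_of_le_one_left (norm_nonneg _) hu1
  linarith

end IsResolventAt

theorem continuousOn_of_isResolventAt {A : X →ₗ.[ℂ] X} {ι : Type*} [TopologicalSpace ι]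
    {lam : ι → ℂ} (hlam : Continuous lam) {R : ι → X →L[ℂ] X} {S : Set ι}
    (hR : ∀ i ∈ S, IsResolventAt A (lam i) (R i)) : ContinuousOn R S := by
  intro i hi
  have hdist : Tendsto (fun j => ‖lam i - lam j‖) (𝓝[S] i) (𝓝 0) := by
    simpa using ((hlam.tendsto i).const_sub (lam i)).norm.mono_left nhdsWithin_le_nhds
  have hsmall : ∀ᶠ j in 𝓝[S] i, ‖lam i - lam j‖ * ‖R i‖ ≤ 1 / 2 := by
    have := hdist.mul_const ‖R i‖
    rw [zero_mul] at this
    exact this.eventually (eventually_le_nhds (by norm_num))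
  rw [ContinuousWithinAt, tendsto_iff_norm_sub_tendsto_zero]
  refine squeeze_zero' (Eventually.of_forall fun _ => norm_nonneg _) ?_
    (by simpa using (hdist.const_mul 2).mul_const (‖R i‖ ^ 2))
  filter_upwards [hsmall, self_mem_nhdsWithin] with j hj hjS
  exact (hR i hi).norm_sub_le_of_small (hR j hjS) hj

theorem norm_cexp_neg_mul_le_one {μ : ℂ} (hμ : 0 ≤ μ.re) {τ : ℝ} (hτ : 0 ≤ τ) :
    ‖cexp (-(μ * τ))‖ ≤ 1 := by
  rw [Complex.norm_exp, Real.exp_le_one_iff]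
  simpa using mul_nonneg hμ hτ

variable {T : ℝ → X →L[ℂ] X} {A : X →ₗ.[ℂ] X}

namespace IsC0Semigroup

theorem apply_comm (hT : IsC0Semigroup T) {s t : ℝ} (hs : 0 ≤ s) (ht : 0 ≤ t) (x : X) :
    T s (T t x) = T t (T s x) := by
  have h := hT.map_add t s ht hs
  rw [add_comm, hT.map_add s t hs ht] at h
  exact congrArg (· x) h

theorem continuousOn_exp_smul (hT : IsC0Semigroup T) (μ : ℂ) (v : X) :
    ContinuousOn (fun τ : ℝ => cexp (-(μ * τ)) • T τ v) (Ici 0) :=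
  (by fun_prop : Continuous fun τ : ℝ => cexp (-(μ * τ))).continuousOn.smul
    (hT.strongContinuity v)

theorem intervalIntegrable_exp_smul (hT : IsC0Semigroup T) (μ : ℂ) (v : X) {t : ℝ}
    (ht : 0 ≤ t) : IntervalIntegrable (fun τ : ℝ => cexp (-(μ * τ)) • T τ v) volume 0 t :=
  ((hT.continuousOn_exp_smul μ v).mono (uIcc_of_le ht ▸ Icc_subset_Ici_self)).intervalIntegrable

end IsC0Semigroup

namespace IsGenerator

theorem tendsto (hA : IsGenerator T A) {x : X} (hx : x ∈ A.domain) :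
    Tendsto (fun t : ℝ => t⁻¹ • (T t x - x)) (𝓝[>] 0) (𝓝 (A ⟨x, hx⟩)) := by
  simpa only [← Complex.ofReal_inv, Complex.coe_smul] using (hA x _).mp ⟨hx, rfl⟩

theorem exists_apply_semigroup (hT : IsC0Semigroup T) (hA : IsGenerator T A) {x : X}
    (hx : x ∈ A.domain) {t : ℝ} (ht : 0 ≤ t) :
    ∃ h : T t x ∈ A.domain, A ⟨T t x, h⟩ = T t (A ⟨x, hx⟩) := by
  refine (hA _ _).mpr ((((T t).continuous.tendsto _).comp ((hA x _).mp ⟨hx, rfl⟩)).congr' ?_)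
  filter_upwards [self_mem_nhdsWithin] with s hs
  simp only [Function.comp_apply, map_smul, map_sub, hT.apply_comm (le_of_lt hs) ht]

theorem hasDerivWithinAt (hT : IsC0Semigroup T) (hA : IsGenerator T A) {x : X}
    (hx : x ∈ A.domain) {t : ℝ} (ht : 0 ≤ t) :
    HasDerivWithinAt (fun τ => T τ x) (T t (A ⟨x, hx⟩)) (Ioi t) t := by
  have hshift : 𝓝[>] t = map (· + t) (𝓝[>] 0) := by rw [map_add_right_nhdsGT, zero_add]
  rw [hasDerivWithinAt_iff_tendsto_slope' self_notMem_Ioi, hshift, tendsto_map'_iff]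
  refine (((T t).continuous.tendsto _).comp (hA.tendsto hx)).congr' ?_
  filter_upwards [self_mem_nhdsWithin] with s hs
  simp only [Function.comp_apply, slope_def_module, add_comm s t, add_sub_cancel_left,
    hT.map_add t s ht (le_of_lt hs), ContinuousLinearMap.comp_apply, map_sub,
    ContinuousLinearMap.map_smul_of_tower]

theorem integral_exp_smul [CompleteSpace X] (hT : IsC0Semigroup T) (hA : IsGenerator T A)
    {x : X} (hx : x ∈ A.domain) (μ : ℂ) {t : ℝ} (ht : 0 ≤ t) :
    ∫ τ in (0 : ℝ)..t, cexp (-(μ * τ)) • T τ (A ⟨x, hx⟩ - μ • x) =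
      cexp (-(μ * t)) • T t x - x := by
  have hderiv : ∀ τ ∈ Ioo 0 t, HasDerivWithinAt (fun τ : ℝ => cexp (-(μ * τ)) • T τ x)
      (cexp (-(μ * τ)) • T τ (A ⟨x, hx⟩ - μ • x)) (Ioi τ) τ := by
    intro τ hτ
    have hexp : HasDerivAt (fun τ : ℝ => cexp (-(μ * τ))) (cexp (-(μ * τ)) * -(μ * 1)) τ :=
      ((hasDerivAt_id τ).ofReal_comp.const_mul μ).neg.cexp
    refine (hexp.hasDerivWithinAt.smul (hA.hasDerivWithinAt hT hx hτ.1.le)).congr_deriv ?_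
    rw [map_sub, map_smul]
    module
  rw [intervalIntegral.integral_eq_sub_of_hasDeriv_right_of_le ht
    ((hT.continuousOn_exp_smul μ x).mono Icc_subset_Ici_self) hderiv
    (hT.intervalIntegrable_exp_smul μ _ ht)]
  simp [hT.map_zero]

variable {lam : ℂ} {R R1 : X →L[ℂ] X}

theorem semigroup_apply_resolvent (hT : IsC0Semigroup T) (hA : IsGenerator T A)
    (hR : IsResolventAt A lam R) {t : ℝ} (ht : 0 ≤ t) (v : X) : T t (R v) = R (T t v) := by
  obtain ⟨hx, hval⟩ := hR.1 v
  obtain ⟨hx', hcomm⟩ := hA.exists_apply_semigroup hT hx ht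
  have h := hR.2 ⟨T t (R v), hx'⟩
  simp only [hcomm] at h
  rw [← h, ← map_smul, ← map_sub, hval]

variable [CompleteSpace X]

theorem resolvent_eq_integral_add (hT : IsC0Semigroup T) (hA : IsGenerator T A)
    (hR : IsResolventAt A lam R) {t : ℝ} (ht : 0 ≤ t) (w : X) :
    R w = (∫ τ in (0 : ℝ)..t, cexp (-(lam * τ)) • T τ w) + cexp (-(lam * t)) • T t (R w) := by
  have hx := hR.mem_domain w
  have h := hA.integral_exp_smul hT hx lam ht
  simp only [hR.apply_eq w hx, sub_sub_cancel_left, map_neg, smul_neg,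
    intervalIntegral.integral_neg] at h
  linear_combination (norm := module) h

theorem norm_integral_exp_smul_le (hT : IsC0Semigroup T) (hA : IsGenerator T A) {M : ℝ}
    (hM : ∀ τ, 0 ≤ τ → ‖T τ‖ ≤ M) {μ : ℂ} (hμ : 0 ≤ μ.re) {t : ℝ} (ht : 0 ≤ t) {x : X}
    (hx : x ∈ A.domain) :
    ‖∫ τ in (0 : ℝ)..t, cexp (-(μ * τ)) • T τ (A ⟨x, hx⟩)‖ ≤ (M + 1 + ‖μ‖ * t * M) * ‖x‖ := by
  have hbound : ∀ τ : ℝ, 0 ≤ τ → ‖cexp (-(μ * τ)) • T τ x‖ ≤ M * ‖x‖ := fun τ hτ =>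
    calc ‖cexp (-(μ * τ)) • T τ x‖ ≤ 1 * (‖T τ‖ * ‖x‖) := by
          rw [norm_smul]; gcongr
          exacts [norm_cexp_neg_mul_le_one hμ hτ, (T τ).le_opNorm x]
      _ ≤ M * ‖x‖ := by rw [one_mul]; gcongr; exact hM τ hτ
  have hsplit : ∫ τ in (0 : ℝ)..t, cexp (-(μ * τ)) • T τ (A ⟨x, hx⟩) =
      (cexp (-(μ * t)) • T t x - x) + μ • ∫ τ in (0 : ℝ)..t, cexp (-(μ * τ)) • T τ x := by
    have h := intervalIntegral.integral_add
      (hT.intervalIntegrable_exp_smul μ (A ⟨x, hx⟩ - μ • x) ht)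
      ((hT.intervalIntegrable_exp_smul μ x ht).smul μ)
    simp only [Pi.smul_apply] at h
    rw [intervalIntegral.integral_smul, hA.integral_exp_smul hT hx μ ht] at h
    rw [← h]
    congr 1 with τ
    rw [map_sub, map_smul]
    module
  have hint : ‖∫ τ in (0 : ℝ)..t, cexp (-(μ * τ)) • T τ x‖ ≤ M * ‖x‖ * t := by
    have h := intervalIntegral.norm_integral_le_of_norm_le_const (a := 0) (b := t)
      (f := fun τ : ℝ => cexp (-(μ * τ)) • T τ x)
      (fun τ hτ => hbound τ (by rw [uIoc_of_le ht] at hτ; exact hτ.1.le))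
    rwa [sub_zero, abs_of_nonneg ht] at h
  rw [hsplit]
  calc _ ≤ ‖cexp (-(μ * t)) • T t x‖ + ‖x‖ +
        ‖μ‖ * ‖∫ τ in (0 : ℝ)..t, cexp (-(μ * τ)) • T τ x‖ := by
        grw [norm_add_le, norm_sub_le, norm_smul μ]
    _ ≤ M * ‖x‖ + ‖x‖ + ‖μ‖ * (M * ‖x‖ * t) := by grw [hbound t ht, hint]
    _ = (M + 1 + ‖μ‖ * t * M) * ‖x‖ := by ring

theorem norm_resolvent_comp_sub_one_le (hT : IsC0Semigroup T) (hA : IsGenerator T A)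
    {M : ℝ} (hM : ∀ τ, 0 ≤ τ → ‖T τ‖ ≤ M) (hR1 : IsResolventAt A 1 R1)
    (hR : IsResolventAt A lam R) (hlam : 0 ≤ lam.re) {t : ℝ} (ht : 0 ≤ t) :
    ‖R.comp (R1 - 1)‖ ≤ (M + 1 + ‖lam‖ * t * M) * ‖R1‖ + ‖R‖ * ‖(T t).comp (R1 - 1)‖ := by
  have hM0 : 0 ≤ M := (norm_nonneg _).trans (hM 0 le_rfl)
  refine ContinuousLinearMap.opNorm_le_bound _ (by positivity) fun z => ?_
  have hx := hR1.mem_domain z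
  have hAx : A ⟨R1 z, hx⟩ = (R1 - 1) z := by simp [hR1.apply_eq z hx]
  rw [ContinuousLinearMap.comp_apply, hA.resolvent_eq_integral_add hT hR ht,
    hA.semigroup_apply_resolvent hT hR ht, ← hAx]
  calc _ ≤ (M + 1 + ‖lam‖ * t * M) * ‖R1 z‖ + 1 * (‖R‖ * ‖T t (A ⟨R1 z, hx⟩)‖) := by
        grw [norm_add_le, hA.norm_integral_exp_smul_le hT hM hlam ht hx, norm_smul,
          norm_cexp_neg_mul_le_one hlam ht, R.le_opNorm]
    _ ≤ (M + 1 + ‖lam‖ * t * M) * (‖R1‖ * ‖z‖) + ‖R‖ * (‖(T t).comp (R1 - 1)‖ * ‖z‖) := by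
        rw [one_mul, hAx, ← ContinuousLinearMap.comp_apply]
        grw [R1.le_opNorm, ((T t).comp (R1 - 1)).le_opNorm]
    _ = _ := by ring

end IsGenerator

theorem norm_resolvent_le_of_decay [CompleteSpace X] (hT : IsC0Semigroup T)
    (hA : IsGenerator T A) {M : ℝ} (hM : ∀ τ, 0 ≤ τ → ‖T τ‖ ≤ M) {lam : ℂ} {R R1 : X →L[ℂ] X}
    (hR1 : IsResolventAt A 1 R1) (hR : IsResolventAt A lam R) (hre : lam.re = 0)
    (hlam : ‖lam‖ ≤ 1) {s t : ℝ} (hs : 0 < s) (hsl : s ≤ ‖lam‖) (ht : 0 ≤ t)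
    (hF : ‖(T t).comp (R1 - 1)‖ < s / 4) :
    ‖R‖ ≤ 4 * ((M + 2) * ‖R1‖ / s + M * ‖R1‖ * t) := by
  have hlower := hR.norm_comp_sub_one_ge hR1 hre.le hlam
  have hupper := hA.norm_resolvent_comp_sub_one_le hT hM hR1 hR hre.ge ht
  have hFN : ‖R‖ * ‖(T t).comp (R1 - 1)‖ ≤ ‖R‖ * (‖lam‖ / 4) := by gcongr; linarith
  have hM0 : 0 ≤ M := (norm_nonneg _).trans (hM 0 le_rfl)
  have hkey : ‖lam‖ * (‖R‖ - 4 * M * ‖R1‖ * t) ≤ 4 * (M + 2) * ‖R1‖ := by nlinarith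
  have hdiv : ‖R‖ - 4 * (M * ‖R1‖ * t) ≤ 4 * ((M + 2) * ‖R1‖ / s) := by
    rw [← mul_div_assoc, le_div_iff₀ hs]
    rcases le_or_gt (‖R‖ - 4 * (M * ‖R1‖ * t)) 0 with h | h
    · nlinarith [norm_nonneg R1]
    · nlinarith
  linarith

section MinimalDominating

variable {g m : ℝ → ℝ}

theorem max_apply_le_of_isLUB
    (hm : ∀ s, 0 < s → s ≤ 1 → IsLUB {y | ∃ r, s ≤ |r| ∧ |r| ≤ 1 ∧ y = g r} (m s))
    {s : ℝ} (hs : 0 < s) (hs1 : s ≤ 1) : max (g s) (g (-s)) ≤ m s :=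
  max_le ((hm s hs hs1).1 ⟨s, by rw [abs_of_pos hs], by rwa [abs_of_pos hs], rfl⟩)
    ((hm s hs hs1).1 ⟨-s, by rw [abs_neg, abs_of_pos hs], by rwa [abs_neg, abs_of_pos hs], rfl⟩)

theorem antitoneOn_of_isLUB
    (hm : ∀ s, 0 < s → s ≤ 1 → IsLUB {y | ∃ r, s ≤ |r| ∧ |r| ≤ 1 ∧ y = g r} (m s)) :
    AntitoneOn m (Ioc 0 1) := by
  rintro s ⟨hs, -⟩ s' ⟨hs', hs'1⟩ hss'
  exact (hm s' hs' hs'1).2 fun _ ⟨r, hr, hr1, hy⟩ =>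
    (hm s hs (hss'.trans hs'1)).1 ⟨r, hss'.trans hr, hr1, hy⟩

theorem exists_le_mul_of_isLUB
    (hm : ∀ s, 0 < s → s ≤ 1 → IsLUB {y | ∃ r, s ≤ |r| ∧ |r| ≤ 1 ∧ y = g r} (m s))
    (hL : ∀ K : ℝ, ∃ δ : ℝ, 0 < δ ∧ δ ≤ 1 ∧ ∀ s : ℝ, 0 < |s| → |s| < δ →
      K ≤ max (|s| * g s) (|s| * g (-s))) (K : ℝ) :
    ∃ δ : ℝ, 0 < δ ∧ δ ≤ 1 ∧ ∀ s : ℝ, 0 < s → s < δ → K ≤ s * m s := by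
  obtain ⟨δ, hδ, hδ1, hK⟩ := hL K
  refine ⟨δ, hδ, hδ1, fun s hs hsδ => ?_⟩
  have h := hK s (by rwa [abs_of_pos hs]) (by rwa [abs_of_pos hs])
  rw [abs_of_pos hs, ← mul_max_of_nonneg _ _ hs.le] at h
  exact h.trans (by gcongr; exact max_apply_le_of_isLUB hm hs (by linarith))

theorem exists_eq_forall_le_of_continuousOn {h : ℝ → ℝ} {a b y : ℝ}
    (hh : ContinuousOn h (Icc a b)) (hb : h b ≤ y) (hy : ∃ c ∈ Icc a b, y ≤ h c) :
    ∃ c ∈ Icc a b, h c = y ∧ ∀ r ∈ Icc c b, h r ≤ y := by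
  set S := Icc a b ∩ h ⁻¹' Ici y
  have hS : IsClosed S := hh.preimage_isClosed_of_isClosed isClosed_Icc isClosed_Ici
  have hbdd : BddAbove S := ⟨b, fun r hr => hr.1.2⟩
  obtain ⟨c₀, hc₀, hyc₀⟩ := hy
  have hc : sSup S ∈ S := hS.csSup_mem ⟨c₀, hc₀, hyc₀⟩ hbdd
  set c := sSup S
  have hlt : ∀ r ∈ Ioc c b, h r < y := fun r hr => not_le.1 fun hyr =>
    hr.1.not_ge (le_csSup hbdd ⟨⟨hc.1.1.trans hr.1.le, hr.2⟩, hyr⟩)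
  have hcy : h c ≤ y := by
    rcases hc.1.2.eq_or_lt with hcb | hcb
    · rwa [hcb]
    · refine ContinuousWithinAt.closure_le (by rw [closure_Ioc hcb.ne]; exact left_mem_Icc.2 hcb.le)
        ((hh c hc.1).mono (Icc_subset_Icc_left hc.1.1 |>.trans' Ioc_subset_Icc_self))
        continuousWithinAt_const fun r hr => (hlt r hr).le
  refine ⟨c, hc.1, le_antisymm hcy hc.2, fun r hr => ?_⟩
  rcases hr.1.eq_or_lt with rfl | hcr
  exacts [hcy, (hlt r ⟨hcr, hr.2⟩).le]

theorem exists_eq_of_isLUB (hg : ContinuousOn g {r | 0 < |r| ∧ |r| ≤ 1})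
    (hm : ∀ s, 0 < s → s ≤ 1 → IsLUB {y | ∃ r, s ≤ |r| ∧ |r| ≤ 1 ∧ y = g r} (m s))
    (hK : ∀ K : ℝ, ∃ δ : ℝ, 0 < δ ∧ δ ≤ 1 ∧ ∀ s : ℝ, 0 < s → s < δ → K ≤ s * m s)
    {y : ℝ} (hy : m 1 ≤ y) : ∃ s ∈ Ioc 0 1, m s = y := by
  -- `m c = y` at the last point `c` of `[δ / 2, 1]` where `max (g c) (g (-c))` reaches `y`.
  obtain ⟨δ, hδ, hδ1, hδK⟩ := hK (|y| + 1)
  have hy₁ : y < m (δ / 2) := by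
    have := hδK (δ / 2) (by positivity) (by linarith)
    nlinarith [le_abs_self y, abs_nonneg y]
  have hg_le : ∀ r, g r ≤ max (g |r|) (g (-|r|)) := fun r => by
    rcases abs_choice r with h | h <;> rw [h] <;> simp
  have hcont : ContinuousOn (fun s => max (g s) (g (-s))) (Icc (δ / 2) 1) := by
    have hsub : Icc (δ / 2) 1 ⊆ {r | 0 < |r| ∧ |r| ≤ 1} := fun s hs => by
      have : 0 < s := by linarith [hs.1]
      exact ⟨abs_pos.2 this.ne', by rw [abs_of_pos this]; exact hs.2⟩
    refine (hg.mono hsub).sup (hg.comp continuousOn_neg fun s hs => ?_)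
    simpa using hsub hs
  obtain ⟨_, ⟨r, hr, hr1, rfl⟩, hyr, -⟩ :=
    (hm (δ / 2) (by positivity) (by linarith)).exists_between hy₁
  obtain ⟨c, hc, hcy, hle⟩ := exists_eq_forall_le_of_continuousOn hcont
    ((max_apply_le_of_isLUB hm one_pos le_rfl).trans hy) ⟨|r|, ⟨hr, hr1⟩, hyr.le.trans (hg_le r)⟩
  have hc0 : 0 < c := by linarith [hc.1]
  refine ⟨c, ⟨hc0, hc.2⟩, le_antisymm ((hm c hc0 hc.2).2 ?_) ?_⟩
  · rintro _ ⟨r, hcr, hr1, rfl⟩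
    exact (hg_le r).trans (hle |r| ⟨hcr, hr1⟩)
  · exact hcy ▸ max_apply_le_of_isLUB hm hc0 hc.2

end MinimalDominating

theorem lower_bound_decay_general
    {X : Type*} [NormedAddCommGroup X] [NormedSpace ℂ X] [CompleteSpace X]
    (T : ℝ → X →L[ℂ] X) (A : X →ₗ.[ℂ] X)
    (hT : IsC0Semigroup T) (hTb : IsBoundedSG T) (hA : IsGenerator T A)
    (R1 : X →L[ℂ] X) (hR1 : IsResolventAt A 1 R1)
    (Rres : ℝ → X →L[ℂ] X)
    (hRres : ∀ r : ℝ, 0 < |r| → |r| ≤ 1 → IsResolventAt A (Complex.I * (r : ℂ)) (Rres r))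
    (hL : ∀ K : ℝ, ∃ δ : ℝ, 0 < δ ∧ δ ≤ 1 ∧ ∀ s : ℝ, 0 < |s| → |s| < δ →
      K ≤ max (|s| * ‖Rres s‖) (|s| * ‖Rres (-s)‖))
    (m : ℝ → ℝ)
    (hm : ∀ s : ℝ, 0 < s → s ≤ 1 →
      IsLUB {y : ℝ | ∃ r : ℝ, s ≤ |r| ∧ |r| ≤ 1 ∧ y = ‖Rres r‖} (m s))
    (minv : ℝ → ℝ)
    (hminv : ∀ y : ℝ, (∃ s ∈ Set.Ioc (0 : ℝ) 1, m s = y) →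
      minv y ∈ Set.Ioc (0 : ℝ) 1 ∧ m (minv y) = y) :
    ∃ c C : ℝ, 0 < c ∧ 0 < C ∧ ∃ t₀ : ℝ, ∀ t : ℝ, t₀ ≤ t →
      c * minv (C * t) ≤ ‖(T t).comp (R1 - 1)‖ := by
  obtain ⟨M, hM⟩ := hTb
  have hM0 : 0 ≤ M := (norm_nonneg _).trans (hM 0 le_rfl)
  have hK := exists_le_mul_of_isLUB hm hL
  have hcont : ContinuousOn (fun r => ‖Rres r‖) {r | 0 < |r| ∧ |r| ≤ 1} :=
    (continuousOn_of_isResolventAt (by fun_prop) fun r hr => hRres r hr.1 hr.2).norm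
  set C := 8 * M * ‖R1‖ + 1 with hC
  have hC0 : 0 < C := by positivity
  obtain ⟨δ, hδ, hδ1, hδK⟩ := hK (8 * (M + 2) * ‖R1‖ + 1)
  refine ⟨1 / 4, C, by norm_num, hC0, (|m 1| + |m δ| + 1) / C, fun t ht => ?_⟩
  have hCt : |m 1| + |m δ| + 1 ≤ C * t := (div_le_iff₀' hC0).1 ht
  have ht0 : 0 ≤ t := (div_nonneg (by positivity) hC0.le).trans ht
  obtain ⟨⟨hs0, hs1⟩, hms⟩ := hminv (C * t)
    (exists_eq_of_isLUB hcont hm hK (by linarith [le_abs_self (m 1), abs_nonneg (m δ)]))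
  set s := minv (C * t)
  have hsδ : s < δ := lt_of_not_ge fun h => by
    have := antitoneOn_of_isLUB hm ⟨hδ, hδ1⟩ ⟨hs0, hs1⟩ h
    linarith [le_abs_self (m δ), abs_nonneg (m 1)]
  by_contra! hF
  have hbound : m s ≤ 4 * ((M + 2) * ‖R1‖ / s + M * ‖R1‖ * t) :=
    (hm s hs0 hs1).2 fun _ ⟨r, hsr, hr1, hy⟩ => hy ▸ norm_resolvent_le_of_decay hT hA hM hR1
      (hRres r (hs0.trans_le hsr) hr1) (by simp) (by simpa) hs0 (by simpa) ht0 (by linarith)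
  have hlow := hδK s hs0 hsδ
  rw [hms, hC] at hbound hlow
  rw [mul_add, mul_div_assoc', ← sub_le_iff_le_add, le_div_iff₀ hs0] at hbound
  nlinarith [mul_nonneg hs0.le ht0]

/-- **Corollary 2.3.**  Let `T` be a bounded C₀-semigroup with generator `A`, with
`iσ(A) ∩ ℝ = {0}` (so `is ∈ ρ(A)` for `0 < |s| ≤ 1`; `Rres s` denotes `R(is, A)`), and
suppose `max{‖s R(is,A)‖, ‖s R(-is,A)‖} → ∞` as `s → 0`.  Let `m` be the minimal
dominating function `m(s) = sup {‖R(ir,A)‖ : s ≤ |r| ≤ 1}` and let `minv` be any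
right-inverse of `m` (defined on the range of `m`).  Here `R1 = R(1, A)`, so that
`A R(1,A) = R1 - 1`.  Then there are constants `c, C > 0` with
`‖T(t) A R(1,A)‖ ≥ c · m⁻¹(C t)` for all sufficiently large `t`. -/
theorem lower_bound_decay
    {X : Type*} [NormedAddCommGroup X] [NormedSpace ℂ X] [CompleteSpace X]
    (T : ℝ → X →L[ℂ] X) (A : X →ₗ.[ℂ] X)
    (hT : IsC0Semigroup T) (hTb : IsBoundedSG T) (hA : IsGenerator T A)
    (hspec : bSpec A = {0})
    (R1 : X →L[ℂ] X) (hR1 : IsResolventAt A 1 R1)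
    (Rres : ℝ → X →L[ℂ] X)
    (hRres : ∀ r : ℝ, 0 < |r| → |r| ≤ 1 → IsResolventAt A (Complex.I * (r : ℂ)) (Rres r))
    (hL : ∀ K : ℝ, ∃ δ : ℝ, 0 < δ ∧ δ ≤ 1 ∧ ∀ s : ℝ, 0 < |s| → |s| < δ →
      K ≤ max (|s| * ‖Rres s‖) (|s| * ‖Rres (-s)‖))
    (m : ℝ → ℝ)
    (hm : ∀ s : ℝ, 0 < s → s ≤ 1 →
      IsLUB {y : ℝ | ∃ r : ℝ, s ≤ |r| ∧ |r| ≤ 1 ∧ y = ‖Rres r‖} (m s))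
    (minv : ℝ → ℝ)
    (hminv : ∀ y : ℝ, (∃ s ∈ Set.Ioc (0 : ℝ) 1, m s = y) →
      minv y ∈ Set.Ioc (0 : ℝ) 1 ∧ m (minv y) = y) :
    ∃ c C : ℝ, 0 < c ∧ 0 < C ∧ ∃ t₀ : ℝ, ∀ t : ℝ, t₀ ≤ t →
      c * minv (C * t) ≤ ‖(T t).comp (R1 - 1)‖ :=
  lower_bound_decay_general T A hT hTb hA R1 hR1 Rres hRres hL m hm minv hminv

end KTpaper
end

section
/- Let X be a complex Banach space and let T be a bounded C₀-semigroup on X with generator A. Suppose that ‖T(t) A R(1, A)‖ → 0 as t → ∞. Then the critical growth bound satisfies δ(T) < 0. -/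
/-!
Put `B = 1 - R(1, A) = -A R(1, A)` and choose `t₀ > 0` with `‖T(t₀) B‖ ≤ 1/2`. Since `B` commutes
with the semigroup, `‖T(t) Bⁿ‖ ≤ M 2⁻ⁿ` whenever `t ≥ n t₀`. As `(1 - B) ∑_{k<n} Bᵏ = 1 - Bⁿ`, the
operators `S(t) = T(t) R(1, A) G(t / t₀)`, with `G` the piecewise-linear interpolation of the
partial sums of the Neumann series of `B`, satisfy `T(t) - S(t) = T(t) ((1 - θ) Bⁿ + θ Bⁿ⁺¹)`, which
decays like `2^(-t/t₀)`. They are norm-continuous because `t ↦ T(t) R(1, A)` is Lipschitz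
(`R(1, A)` maps into the domain of `A`), and bounded because `T` is.
-/

open Filter Topology MeasureTheory Set

namespace KTpaper

variable {X : Type*} [NormedAddCommGroup X] [NormedSpace ℂ X] [CompleteSpace X]

omit [CompleteSpace X]

section NeumannInterpolation

variable {𝔸 : Type*} [NormedRing 𝔸] [NormedAlgebra ℝ 𝔸]

/-- `u ↦ ∑_{k < ⌊u⌋} B^k + (u - ⌊u⌋) • B^⌊u⌋`, the piecewise-linear interpolation of the partial
sums of the Neumann series of `B` (see `neumannInterp_eq`); written with clamped coefficients so
that it is visibly continuous. -/
noncomputable def neumannInterp (B : 𝔸) (u : ℝ) : 𝔸 :=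
  ∑ k ∈ Finset.range (⌊u⌋₊ + 1), (projIcc (0 : ℝ) 1 zero_le_one (u - k) : ℝ) • B ^ k

theorem neumannInterp_eq_sum_range (B : 𝔸) {K : ℕ} {u : ℝ} (hu₀ : 0 ≤ u) (huK : u < K) :
    neumannInterp B u =
      ∑ k ∈ Finset.range K, (projIcc (0 : ℝ) 1 zero_le_one (u - k) : ℝ) • B ^ k := by
  refine Finset.sum_subset (Finset.range_subset_range.mpr ((Nat.floor_lt hu₀).mpr huK)) ?_
  intro k _ hk
  have hlt : u < k := (Nat.lt_floor_add_one u).trans_le (by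
    exact_mod_cast not_lt.mp (Finset.mem_range.not.mp hk))
  rw [projIcc_of_le_left _ (by linarith), Subtype.coe_mk, zero_smul]

theorem continuousOn_neumannInterp (B : 𝔸) : ContinuousOn (neumannInterp B) (Ioi 0) := by
  intro u₀ hu₀
  set K := ⌊u₀⌋₊ + 1
  have hsum : Continuous fun u : ℝ =>
      ∑ k ∈ Finset.range K, (projIcc (0 : ℝ) 1 zero_le_one (u - k) : ℝ) • B ^ k := by
    fun_prop
  refine (hsum.continuousAt.congr ?_).continuousWithinAt
  have hK : u₀ < K := by simpa [K] using Nat.lt_floor_add_one u₀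
  filter_upwards [(isOpen_Ioi.inter isOpen_Iio).mem_nhds ⟨hu₀, hK⟩] with u hu
  exact (neumannInterp_eq_sum_range B (le_of_lt hu.1) hu.2).symm

theorem neumannInterp_eq (B : 𝔸) {u : ℝ} (hu : 0 ≤ u) :
    neumannInterp B u = ∑ k ∈ Finset.range ⌊u⌋₊, B ^ k + (u - ⌊u⌋₊) • B ^ ⌊u⌋₊ := by
  have hfloor := Nat.floor_le hu
  have hfloor' := Nat.lt_floor_add_one u
  rw [neumannInterp, Finset.sum_range_succ, projIcc_of_mem _ ⟨by linarith, by linarith⟩]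
  congr 1
  refine Finset.sum_congr rfl fun k hk => ?_
  have hk : (k : ℝ) + 1 ≤ ⌊u⌋₊ := by exact_mod_cast Finset.mem_range.mp hk
  rw [projIcc_of_right_le _ (by linarith), Subtype.coe_mk, one_smul]

theorem one_sub_mul_neumannInterp (B : 𝔸) {u : ℝ} (hu : 0 ≤ u) :
    1 - (1 - B) * neumannInterp B u
      = (1 - (u - ⌊u⌋₊)) • B ^ ⌊u⌋₊ + (u - ⌊u⌋₊) • B ^ (⌊u⌋₊ + 1) := by
  have hgeom : (1 - B) * ∑ k ∈ Finset.range ⌊u⌋₊, B ^ k = 1 - B ^ ⌊u⌋₊ := by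
    rw [← neg_sub B 1, neg_mul, mul_geom_sum, neg_sub]
  rw [neumannInterp_eq B hu, mul_add, hgeom, mul_smul_comm, sub_mul, one_mul, ← pow_succ']
  module

end NeumannInterpolation

theorem inv_two_pow_floor_div_le (t t₀ : ℝ) :
    (2 : ℝ)⁻¹ ^ ⌊t / t₀⌋₊ ≤ 2 * Real.exp (-(Real.log 2 / t₀) * t) := by
  have hfloor := Nat.lt_floor_add_one (t / t₀)
  have hlog : 0 < Real.log 2 := Real.log_pos one_lt_two
  calc (2 : ℝ)⁻¹ ^ ⌊t / t₀⌋₊ = Real.exp (-(⌊t / t₀⌋₊ * Real.log 2)) := by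
        rw [Real.exp_neg, Real.exp_nat_mul, Real.exp_log two_pos, inv_pow]
    _ ≤ Real.exp (Real.log 2 - t / t₀ * Real.log 2) := Real.exp_le_exp.mpr (by nlinarith)
    _ = 2 * Real.exp (-(Real.log 2 / t₀) * t) := by
        rw [sub_eq_add_neg, Real.exp_add, Real.exp_log two_pos]
        ring_nf

section Semigroup

variable {T : ℝ → X →L[ℂ] X} {A : X →ₗ.[ℂ] X} {M : ℝ}

theorem IsC0Semigroup.map_add_eq_mul (hT : IsC0Semigroup T) {s t : ℝ} (hs : 0 ≤ s)
    (ht : 0 ≤ t) : T (s + t) = T s * T t :=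
  hT.map_add s t hs ht

theorem IsC0Semigroup.commute (hT : IsC0Semigroup T) {s t : ℝ} (hs : 0 ≤ s) (ht : 0 ≤ t) :
    Commute (T s) (T t) := by
  rw [Commute, SemiconjBy, ← hT.map_add_eq_mul hs ht, ← hT.map_add_eq_mul ht hs, add_comm]

theorem IsGenerator.hasDerivWithinAt_orbit (hT : IsC0Semigroup T) (hA : IsGenerator T A)
    {z : X} (hz : z ∈ A.domain) {s : ℝ} (hs : 0 ≤ s) :
    HasDerivWithinAt (fun u => T u z) (T s (A ⟨z, hz⟩)) (Ici s) s := by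
  have hgen := (hA z _).mp ⟨hz, rfl⟩
  have hshift : Tendsto (fun u : ℝ => u - s) (𝓝[>] s) (𝓝[>] 0) :=
    le_of_eq (by rw [map_subRight_nhdsGT, sub_self])
  rw [hasDerivWithinAt_iff_tendsto_slope, Ici_sdiff_left]
  refine (((T s).continuous.tendsto _).comp (hgen.comp hshift)).congr' ?_
  filter_upwards [self_mem_nhdsWithin] with u (hu : s < u)
  have hsplit : T u = T s * T (u - s) := by
    rw [← hT.map_add_eq_mul hs (sub_nonneg.mpr hu.le), add_sub_cancel]
  have hsplit (y : X) : T u y = T s (T (u - s) y) := DFunLike.congr_fun hsplit y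
  simp only [Function.comp_apply, ContinuousLinearMap.map_smul_of_tower, map_sub,
    slope_def_module, hsplit, ← Complex.ofReal_inv, Complex.coe_smul]

theorem IsGenerator.orbit_mem_domain (hT : IsC0Semigroup T) (hA : IsGenerator T A)
    {z : X} (hz : z ∈ A.domain) {t : ℝ} (ht : 0 ≤ t) :
    ∃ h : T t z ∈ A.domain, A ⟨T t z, h⟩ = T t (A ⟨z, hz⟩) := by
  have hgen := (hA z _).mp ⟨hz, rfl⟩
  refine (hA _ _).mpr ((((T t).continuous.tendsto _).comp hgen).congr' ?_)
  filter_upwards [self_mem_nhdsWithin] with k (hk : 0 < k)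
  have hcomm : T t (T k z) = T k (T t z) := DFunLike.congr_fun (hT.commute ht hk.le).eq z
  simp only [Function.comp_apply, map_smul, map_sub, hcomm]

theorem IsGenerator.norm_orbit_sub_le (hT : IsC0Semigroup T) (hA : IsGenerator T A)
    (hM : ∀ t, 0 ≤ t → ‖T t‖ ≤ M) {z : X} (hz : z ∈ A.domain) {a b : ℝ} (ha : 0 ≤ a)
    (hab : a ≤ b) : ‖T b z - T a z‖ ≤ M * ‖A ⟨z, hz⟩‖ * (b - a) := by
  refine norm_image_sub_le_of_norm_deriv_right_le_segment
    ((hT.strongContinuity z).mono fun u hu => ha.trans hu.1)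
    (fun u hu => hA.hasDerivWithinAt_orbit hT hz (ha.trans hu.1)) (fun u hu => ?_)
    b ⟨hab, le_rfl⟩
  exact ((T u).le_opNorm _).trans
    (mul_le_mul_of_nonneg_right (hM u (ha.trans hu.1)) (norm_nonneg _))

variable {R : X →L[ℂ] X} {lam : ℂ}

theorem IsResolventAt.apply_mem_domain (hR : IsResolventAt A lam R) (x : X) :
    ∃ h : R x ∈ A.domain, A ⟨R x, h⟩ = lam • R x - x := by
  obtain ⟨h, hx⟩ := hR.1 x
  exact ⟨h, eq_sub_of_add_eq (sub_eq_iff_eq_add'.mp hx).symm⟩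

theorem IsResolventAt.commute (hT : IsC0Semigroup T) (hA : IsGenerator T A)
    (hR : IsResolventAt A lam R) {t : ℝ} (ht : 0 ≤ t) : Commute (T t) R := by
  ext x
  obtain ⟨hRx, hARx⟩ := hR.apply_mem_domain x
  obtain ⟨hd, hAd⟩ := hA.orbit_mem_domain hT hRx ht
  have h := hR.2 ⟨T t (R x), hd⟩
  simp only [hAd, hARx, map_sub, map_smul, sub_sub_cancel] at h
  exact h.symm

theorem IsResolventAt.norm_mul_sub_le (hT : IsC0Semigroup T) (hA : IsGenerator T A)
    (hR : IsResolventAt A lam R) (hM : ∀ t, 0 ≤ t → ‖T t‖ ≤ M) {a b : ℝ} (ha : 0 ≤ a)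
    (hab : a ≤ b) : ‖T b * R - T a * R‖ ≤ M * ‖lam • R - 1‖ * (b - a) := by
  have hM₀ : 0 ≤ M := (norm_nonneg _).trans (hM 0 le_rfl)
  refine ContinuousLinearMap.opNorm_le_bound _ (by positivity) fun x => ?_
  obtain ⟨hRx, hARx⟩ := hR.apply_mem_domain x
  calc ‖T b (R x) - T a (R x)‖ ≤ M * ‖A ⟨R x, hRx⟩‖ * (b - a) :=
        hA.norm_orbit_sub_le hT hM hRx ha hab
    _ ≤ M * (‖lam • R - 1‖ * ‖x‖) * (b - a) := by
        rw [hARx]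
        gcongr
        exact (lam • R - 1).le_opNorm x
    _ = M * ‖lam • R - 1‖ * (b - a) * ‖x‖ := by ring

theorem IsResolventAt.continuousOn_mul (hT : IsC0Semigroup T) (hA : IsGenerator T A)
    (hR : IsResolventAt A lam R) (hM : ∀ t, 0 ≤ t → ‖T t‖ ≤ M) :
    ContinuousOn (fun t => T t * R) (Ici 0) := by
  have hM₀ : 0 ≤ M := (norm_nonneg _).trans (hM 0 le_rfl)
  have hC : 0 ≤ M * ‖lam • R - 1‖ := by positivity
  refine (LipschitzOnWith.of_dist_le_mul (K := Real.toNNReal (M * ‖lam • R - 1‖))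
    fun s hs t ht => ?_).continuousOn
  rw [dist_eq_norm, Real.dist_eq, Real.coe_toNNReal _ hC]
  rcases le_total s t with hst | hts
  · rw [norm_sub_rev, abs_sub_comm, abs_of_nonneg (sub_nonneg.mpr hst)]
    exact hR.norm_mul_sub_le hT hA hM hs hst
  · rw [abs_of_nonneg (sub_nonneg.mpr hts)]
    exact hR.norm_mul_sub_le hT hA hM ht hts

theorem IsC0Semigroup.norm_mul_pow_le (hT : IsC0Semigroup T) (hM : ∀ t, 0 ≤ t → ‖T t‖ ≤ M)
    {B : X →L[ℂ] X} {t₀ q : ℝ} (ht₀ : 0 ≤ t₀) (hB : Commute (T t₀) B) (hq : ‖T t₀ * B‖ ≤ q)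
    (n : ℕ) {t : ℝ} (ht : n * t₀ ≤ t) : ‖T t * B ^ n‖ ≤ M * q ^ n := by
  induction n generalizing t with
  | zero => simpa using hM t (by simpa using ht)
  | succ n ih =>
    have ht' : n * t₀ ≤ t - t₀ := by push_cast at ht; linarith
    have hsplit : T t * B ^ (n + 1) = T (t - t₀) * B ^ n * (T t₀ * B) := by
      have h0 : 0 ≤ t - t₀ := (by positivity : (0 : ℝ) ≤ n * t₀).trans ht'
      rw [← sub_add_cancel t t₀, hT.map_add_eq_mul h0 ht₀, add_sub_cancel_right, pow_succ,
        mul_assoc, ← mul_assoc (T t₀), (hB.pow_right n).eq, mul_assoc, mul_assoc]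
    calc ‖T t * B ^ (n + 1)‖ ≤ ‖T (t - t₀) * B ^ n‖ * ‖T t₀ * B‖ := hsplit ▸ norm_mul_le _ _
      _ ≤ M * q ^ n * q :=
        mul_le_mul (ih ht') hq (norm_nonneg _) ((norm_nonneg _).trans (ih ht'))
      _ = M * q ^ (n + 1) := by ring

theorem IsC0Semigroup.norm_mul_one_sub_mul_neumannInterp_le (hT : IsC0Semigroup T)
    (hM : ∀ t, 0 ≤ t → ‖T t‖ ≤ M) {B : X →L[ℂ] X} {t₀ q : ℝ} (ht₀ : 0 < t₀)
    (hB : Commute (T t₀) B) (hq : ‖T t₀ * B‖ ≤ q) {t : ℝ} (ht : 0 ≤ t) :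
    ‖T t * (1 - (1 - B) * neumannInterp B (t / t₀))‖ ≤ M * (1 + ‖B‖) * q ^ ⌊t / t₀⌋₊ := by
  set u := t / t₀
  set n := ⌊u⌋₊
  have hu : 0 ≤ u := div_nonneg ht ht₀.le
  have hθ₀ : 0 ≤ u - n := sub_nonneg.mpr (Nat.floor_le hu)
  have hθ₁ : u - n ≤ 1 := by linarith [Nat.lt_floor_add_one u]
  have hn : ‖T t * B ^ n‖ ≤ M * q ^ n :=
    hT.norm_mul_pow_le hM ht₀.le hB hq n (by
      rw [← le_div_iff₀ ht₀]; exact Nat.floor_le hu)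
  have hn' : ‖T t * B ^ (n + 1)‖ ≤ M * q ^ n * ‖B‖ := by
    rw [pow_succ, ← mul_assoc]
    exact (norm_mul_le _ _).trans (by gcongr)
  rw [one_sub_mul_neumannInterp B hu, mul_add, mul_smul_comm, mul_smul_comm]
  calc _ ≤ (1 - (u - n)) * ‖T t * B ^ n‖ + (u - n) * ‖T t * B ^ (n + 1)‖ := by
        refine (norm_add_le _ _).trans (add_le_add ?_ ?_) <;>
          rw [norm_smul, Real.norm_of_nonneg (by linarith)]
    _ ≤ ‖T t * B ^ n‖ + ‖T t * B ^ (n + 1)‖ := by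
        nlinarith [norm_nonneg (T t * B ^ n), norm_nonneg (T t * B ^ (n + 1))]
    _ ≤ M * (1 + ‖B‖) * q ^ n := by linarith

end Semigroup

theorem growthBound_le_of_norm_le {S : ℝ → X →L[ℂ] X} {C ω : ℝ}
    (h : ∀ t, 0 < t → ‖S t‖ ≤ C * Real.exp (ω * t)) : growthBound S ≤ ω :=
  sInf_le ⟨ω, rfl, max C 1, le_max_right _ _, fun t ht =>
    (h t ht).trans (by gcongr; exact le_max_left _ _)⟩

theorem delta'_lt_zero_of_norm_sub_le {T S : ℝ → X →L[ℂ] X} {M C ω : ℝ}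
    (hM : ∀ t, 0 ≤ t → ‖T t‖ ≤ M) (hS : ContinuousOn S (Ioi 0)) (hω : 0 < ω)
    (hTS : ∀ t, 0 < t → ‖T t - S t‖ ≤ C * Real.exp (-ω * t)) : delta' T < 0 := by
  have hM₀ : 0 ≤ M := (norm_nonneg _).trans (hM 0 le_rfl)
  have hSb : ∀ t, 0 < t → ‖S t‖ ≤ (M + |C|) * Real.exp (0 * t) := fun t ht => by
    have hexp : Real.exp (-ω * t) ≤ 1 := Real.exp_le_one_iff.mpr (by nlinarith)
    have hC : C * Real.exp (-ω * t) ≤ |C| := (mul_le_mul_of_nonneg_right (le_abs_self C)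
      (Real.exp_pos _).le).trans (mul_le_of_le_one_right (abs_nonneg C) hexp)
    calc ‖S t‖ = ‖T t - (T t - S t)‖ := by rw [sub_sub_cancel]
      _ ≤ ‖T t‖ + ‖T t - S t‖ := norm_sub_le _ _
      _ ≤ (M + |C|) * Real.exp (0 * t) := by
          rw [zero_mul, Real.exp_zero, mul_one]; linarith [hM t ht.le, hTS t ht]
  calc delta' T ≤ growthBound (fun t => T t - S t) :=
        sInf_le ⟨S, hS, ⟨M + |C|, by positivity, 0, hSb⟩, rfl⟩
    _ ≤ ((-ω : ℝ) : EReal) := growthBound_le_of_norm_le hTS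
    _ < 0 := by exact_mod_cast neg_lt_zero.mpr hω

-- `hdecay` encodes `A R(1, A)` as `R1 - 1`.
/-- **Proposition 4.1.**  Let `T` be a bounded C₀-semigroup with generator `A`, and
let `R1 = R(1, A)` (so that `A R(1,A) = R1 - 1`).  If `‖T(t) A R(1,A)‖ → 0` as
`t → ∞`, then the critical growth bound satisfies `δ(T) < 0`. -/
theorem critical_growth_bound_negative
    {X : Type*} [NormedAddCommGroup X] [NormedSpace ℂ X] [CompleteSpace X]
    (T : ℝ → X →L[ℂ] X) (A : X →ₗ.[ℂ] X)
    (hT : IsC0Semigroup T) (hTb : IsBoundedSG T) (hA : IsGenerator T A)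
    (R1 : X →L[ℂ] X) (hR1 : IsResolventAt A 1 R1)
    (hdecay : Filter.Tendsto (fun t : ℝ => ‖(T t).comp (R1 - 1)‖)
      Filter.atTop (nhds 0)) :
    delta' T < (0 : EReal) := by
  obtain ⟨M, hM⟩ := hTb
  have hM₀ : 0 ≤ M := (norm_nonneg _).trans (hM 0 le_rfl)
  set B := 1 - R1 with hB
  obtain ⟨t₀, hsmall, ht₀⟩ : ∃ t₀, ‖T t₀ * B‖ ≤ 2⁻¹ ∧ 0 < t₀ := by
    have hhalf : (0 : ℝ) < 2⁻¹ := by norm_num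
    obtain ⟨t, hsmall, ht⟩ :=
      ((hdecay.eventually (ge_mem_nhds hhalf)).and (eventually_gt_atTop 0)).exists
    refine ⟨t, ?_, ht⟩
    rwa [← norm_neg, ← mul_neg, hB, neg_sub]
  have hBcomm : Commute (T t₀) B := (Commute.one_right _).sub_right (hR1.commute hT hA ht₀.le)
  set S := fun t => T t * ((1 - B) * neumannInterp B (t / t₀))
  have hS : ContinuousOn S (Ioi 0) := by
    simp only [S, B, sub_sub_cancel, ← mul_assoc]
    exact ((hR1.continuousOn_mul hT hA hM).mono Ioi_subset_Ici_self).mul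
      ((continuousOn_neumannInterp B).comp (continuous_id.div_const t₀).continuousOn
        fun t ht => div_pos ht ht₀)
  refine delta'_lt_zero_of_norm_sub_le hM hS (div_pos (Real.log_pos one_lt_two) ht₀)
    (C := M * (1 + ‖B‖) * 2) fun t ht => ?_
  calc ‖T t - S t‖ = ‖T t * (1 - (1 - B) * neumannInterp B (t / t₀))‖ := by
        rw [mul_sub, mul_one]
    _ ≤ M * (1 + ‖B‖) * 2⁻¹ ^ ⌊t / t₀⌋₊ :=
        hT.norm_mul_one_sub_mul_neumannInterp_le hM ht₀ hBcomm hsmall ht.le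
    _ ≤ M * (1 + ‖B‖) * 2 * Real.exp (-(Real.log 2 / t₀) * t) := by
        rw [mul_assoc _ 2]
        gcongr
        exact inv_two_pow_floor_div_le t t₀

end KTpaper
end
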